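/- arXiv:1310.5429 — 3 statements merged into one kernel-verified Lean document; each statement's English description precedes it below -/
import Mathlib

section
/- Let X be a Banach space, ξ ≥ 1 a countable ordinal and (e_n)_n an element of SM_ξ^w(X). Then for every regular thin family ℱ with o(ℱ) ≥ ξ and every infinite subset M of ℕ there exist an infinite subset L of M and an ℱ-sequence (x_s)_{s∈ℱ} in X such that the ℱ-subsequence (x_s)_{s∈ℱ↾L} is subordinated, weakly null, and generates (e_n)_n as an ℱ-spreading model with respect to some null sequence of positive reals. -/
open Set Filter Topology

/-- `nth s i` is the `i`-th least element of the finite set `s`, 1-indexed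
(junk value `0` if `i = 0` or `i > |s|`). -/
noncomputable def nth (s : Finset ℕ) (i : ℕ) : ℕ :=
  (s.sort (· ≤ ·)).getD (i - 1) 0

/-- Characteristic function of a finite subset of ℕ. -/
def charFun (s : Finset ℕ) : ℕ → Bool := fun n => decide (n ∈ s)

/-- The topology on finite subsets of ℕ induced from the product topology on `{0,1}^ℕ`
via characteristic functions. -/
instance : TopologicalSpace (Finset ℕ) :=
  TopologicalSpace.induced charFun inferInstance

/-- A family of finite sets is compact if the corresponding set of characteristic
functions is compact in `{0,1}^ℕ`. -/
def CompactFam (F : Set (Finset ℕ)) : Prop := IsCompact (charFun '' F)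

/-- Hereditary family: closed under subsets. -/
def Hereditary (F : Set (Finset ℕ)) : Prop := ∀ s ∈ F, ∀ t, t ⊆ s → t ∈ F

/-- Spreading family. -/
def Spreading (F : Set (Finset ℕ)) : Prop :=
  ∀ s ∈ F, ∀ t : Finset ℕ, t.card = s.card →
    (∀ i, 1 ≤ i → i ≤ s.card → nth s i ≤ nth t i) → t ∈ F

/-- Regular family: compact, hereditary and spreading. -/
def RegularFam (F : Set (Finset ℕ)) : Prop := CompactFam F ∧ Hereditary F ∧ Spreading F

/-- `s` is an initial segment of `t` (possibly `s = t`). -/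
def IsInitialSegment (s t : Finset ℕ) : Prop :=
  s ⊆ t ∧ ∀ a ∈ s, ∀ b ∈ t, b ∉ s → a < b

/-- Thin family: no element is a proper initial segment of another. -/
def ThinFam (F : Set (Finset ℕ)) : Prop :=
  ∀ s ∈ F, ∀ t ∈ F, IsInitialSegment s t → s = t

/-- Regular thin family: the set of maximal elements (under inclusion) of some
regular family. -/
def RegularThin (F : Set (Finset ℕ)) : Prop :=
  ∃ R : Set (Finset ℕ), RegularFam R ∧ F = {s ∈ R | ∀ t ∈ R, s ⊆ t → s = t}

/-- The closure `ℱ̂` of a family: all subsets of its elements. -/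
def closureFam (F : Set (Finset ℕ)) : Set (Finset ℕ) := {s | ∃ t ∈ F, s ⊆ t}

/-- Restriction `ℱ↾L` of a family to the range of `L : ℕ → ℕ`. -/
def restrict (F : Set (Finset ℕ)) (L : ℕ → ℕ) : Set (Finset ℕ) :=
  {s ∈ F | ↑s ⊆ Set.range L}

/-- The order `o(ℱ)` of a regular thin family: the rank of `ℱ̂` partially ordered by
reverse inclusion; equivalently, the rank of `∅` for the relation in which the
predecessors of `t` are its strict supersets in `ℱ̂`.  (Junk value `0` if the relation
is not well-founded or `∅ ∉ ℱ̂`.) -/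
noncomputable def famOrder (F : Set (Finset ℕ)) : Ordinal := by
  classical
  exact if h : WellFounded (fun s t : closureFam F => (t : Finset ℕ) ⊂ (s : Finset ℕ)) then
    (if he : (∅ : Finset ℕ) ∈ closureFam F then (h.apply (⟨∅, he⟩ : closureFam F)).rank else 0)
  else 0

/-- Plegma family of length `l` (given as the first `l` terms of `s`). -/
def IsPlegma (l : ℕ) (s : ℕ → Finset ℕ) : Prop :=
  (∀ i < l, (s i).Nonempty) ∧
  (∀ i j, i < j → j < l → ∀ k, 1 ≤ k → k ≤ min (s i).card (s j).card →
      nth (s i) k < nth (s j) k) ∧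
  (∀ i < l, ∀ j < l, ∀ k, 1 ≤ k → k ≤ min (s i).card ((s j).card - 1) →
      nth (s i) k < nth (s j) (k + 1))

/-- The finitely supported vector `∑_{j<l} a_j e_j` in `c00 = ℕ →₀ ℝ`. -/
noncomputable def comb (a : ℕ → ℝ) (l : ℕ) : ℕ →₀ ℝ :=
  ∑ j ∈ Finset.range l, Finsupp.single j (a j)

variable {X : Type*} [NormedAddCommGroup X] [NormedSpace ℝ X]

/-- The `ℱ`-subsequence `(x_s)_{s ∈ ℱ↾M}` generates the sequence represented by the
seminorm `ρ` on `c00` as an `ℱ`-spreading model, with respect to `(δ_n)`.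
Here `M : ℕ → ℕ` is the (0-indexed) increasing enumeration of an infinite set. -/
def Generates (F : Set (Finset ℕ)) (M : ℕ → ℕ) (x : Finset ℕ → X) (δ : ℕ → ℝ)
    (ρ : Seminorm ℝ (ℕ →₀ ℝ)) : Prop :=
  ∀ k l : ℕ, 1 ≤ k → k ≤ l → ∀ a : ℕ → ℝ, (∀ j, |a j| ≤ 1) →
    ∀ s : ℕ → Finset ℕ, (∀ j < k, s j ∈ restrict F M) → IsPlegma k s →
      M l ≤ nth (s 0) 1 →
      |‖∑ j ∈ Finset.range k, a j • x (s j)‖ - ρ (comb a k)| ≤ δ l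

/-- Joint `ℱ`-model generated by a `k`-tuple `(x^0, …, x^{k-1})` of `ℱ`-sequences;
`x^{i_k(j)}` (1-indexed) corresponds to `x (j % k)` (0-indexed). -/
def JointGenerates (F : Set (Finset ℕ)) (k : ℕ) (x : ℕ → Finset ℕ → X) (M : ℕ → ℕ)
    (δ : ℕ → ℝ) (ρ : Seminorm ℝ (ℕ →₀ ℝ)) : Prop :=
  ∀ m n : ℕ, 1 ≤ m → m ≤ n → ∀ a : ℕ → ℝ, (∀ j, |a j| ≤ 1) →
    ∀ s : ℕ → Finset ℕ, (∀ j < m, s j ∈ restrict F M) → IsPlegma m s →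
      M n ≤ nth (s 0) 1 →
      |‖∑ j ∈ Finset.range m, a j • x (j % k) (s j)‖ - ρ (comb a m)| ≤ δ n

/-- The `ℱ`-subsequence `(x_s)_{s∈ℱ↾L}` is subordinated: `x` extends to a map on
`ℱ̂↾L` that is continuous into `X` with its weak topology. -/
def Subordinated (F : Set (Finset ℕ)) (L : ℕ → ℕ) (x : Finset ℕ → X) : Prop :=
  ∃ φ : Finset ℕ → X,
    Continuous (fun t : {t // t ∈ closureFam F ∧ ↑t ⊆ Set.range L} =>
      (φ (t : Finset ℕ) : WeakSpace ℝ X)) ∧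
    ∀ s ∈ restrict F L, φ s = x s

/-- The `ℱ`-subsequence `(x_s)_{s∈ℱ↾L}` is weakly null. -/
def WeaklyNull (F : Set (Finset ℕ)) (L : ℕ → ℕ) (x : Finset ℕ → X) : Prop :=
  ∀ f : X →L[ℝ] ℝ, ∀ ε : ℝ, 0 < ε → ∃ n₀ : ℕ,
    ∀ s ∈ restrict F L, n₀ ≤ nth s 1 → |f (x s)| < ε

/-- `(δ_n)` is a null sequence of positive reals. -/
def NullPos (δ : ℕ → ℝ) : Prop :=
  (∀ n, 0 < δ n) ∧ Tendsto δ atTop (𝓝 0)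

/-- `SM_ξ^w(X)`: `ρ` represents a `ξ`-order spreading model of `X` generated by a
subordinated weakly null `ℱ`-subsequence, for some regular thin `ℱ` of order `ξ`. -/
def SMw (ξ : Ordinal) (X : Type*) [NormedAddCommGroup X] [NormedSpace ℝ X]
    (ρ : Seminorm ℝ (ℕ →₀ ℝ)) : Prop :=
  ∃ F : Set (Finset ℕ), RegularThin F ∧ famOrder F = ξ ∧
    ∃ M : ℕ → ℕ, StrictMono M ∧ ∃ x : Finset ℕ → X, ∃ δ : ℕ → ℝ, NullPos δ ∧
      Subordinated F M x ∧ WeaklyNull F M x ∧ Generates F M x δ ρ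

/-- `ρ₁` is `C`-dominated by `ρ₂`. -/
def DominatedBy (C : ℝ) (ρ₁ ρ₂ : Seminorm ℝ (ℕ →₀ ℝ)) : Prop :=
  ∀ v : ℕ →₀ ℝ, ρ₁ v ≤ C * ρ₂ v

/-- Domination `ρ₁ ⪯ ρ₂`. -/
def Dom (ρ₁ ρ₂ : Seminorm ℝ (ℕ →₀ ℝ)) : Prop := ∃ C : ℝ, 0 < C ∧ DominatedBy C ρ₁ ρ₂

/-- Equivalence `ρ₁ ∼ ρ₂`. -/
def EquivSeq (ρ₁ ρ₂ : Seminorm ℝ (ℕ →₀ ℝ)) : Prop := Dom ρ₁ ρ₂ ∧ Dom ρ₂ ρ₁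

/-- Strict domination `ρ₁ ≺ ρ₂`. -/
def SDom (ρ₁ ρ₂ : Seminorm ℝ (ℕ →₀ ℝ)) : Prop := Dom ρ₁ ρ₂ ∧ ¬ EquivSeq ρ₁ ρ₂

/-- The image family `L(ℱ) = {L(s) : s ∈ ℱ}`. -/
def mapFam (L : ℕ → ℕ) (F : Set (Finset ℕ)) : Set (Finset ℕ) := (fun s => s.image L) '' F

/-- `ℋ₁ ⊑ ℋ₂`: every element of `ℋ₁` is an initial segment of an element of `ℋ₂`,
and every element of `ℋ₂` has an initial segment in `ℋ₁`. -/
def Sqsubseteq (H1 H2 : Set (Finset ℕ)) : Prop :=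
  (∀ s ∈ H1, ∃ t ∈ H2, IsInitialSegment s t) ∧ (∀ t ∈ H2, ∃ s ∈ H1, IsInitialSegment s t)

/-- The regular thin family of singletons of ℕ (of order 1). -/
def singFam : Set (Finset ℕ) := {s : Finset ℕ | s.card = 1}

/-- The set `[ℕ]^∞` of infinite subsets of ℕ. -/
def NatInf : Type := {S : Set ℕ // S.Infinite}

/-- `[ℕ]^∞` is topologized as a subspace of `{0,1}^ℕ` via characteristic functions. -/
noncomputable instance : TopologicalSpace NatInf :=
  TopologicalSpace.induced
    (fun S : NatInf => fun n : ℕ => @decide (n ∈ S.1) (Classical.dec _)) inferInstance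

/-- The (0-indexed) increasing enumeration of an infinite subset of ℕ. -/
noncomputable def enumInf (S : NatInf) (j : ℕ) : ℕ := Nat.nth (· ∈ S.1) j

/-!
Let `(x_s)_{s ∈ 𝒢↾M'}` witness `ρ ∈ SM_ξ^w(X)`, so `o(𝒢) = ξ ≤ o(ℱ)`. It suffices to find
`L ⊆ M` and a continuous `ψ : ℱ̂↾L → 𝒢̂↾M'` sending `ℱ↾L` into `𝒢↾M'` and plegma tuples to
plegma tuples without lowering minima: then `(x_{ψ s})_{s ∈ ℱ↾L}` works.

Choose `θ ⊆ M'` so that a non-maximal member of `𝒢̂` made of earlier terms of `θ` always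
extends by the next term, and then, diagonally, `L ⊆ M` so that whenever `θ(q) ∈ 𝒢̂` for a set
of positions `q`, also `L(q) ∈ ℱ̂` with rank at least that of `θ(q)`; this is possible because
`o(𝒢) ≤ o(ℱ)` and ranks in a spreading family do not decrease under spreads. Put
`ψ(L(q)) = θ(q')` for the longest initial segment `q'` of `q` with `θ(q') ∈ 𝒢̂`. It is determined
by finite pieces of its argument, hence continuous, and it respects the order of positions,
hence plegma tuples. If `ψ(s)` were not maximal, the first skipped position would contradict
the choice of `θ`, so `q' = q`, and rank domination would give `s` a proper extension in `ℱ̂`.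
-/

lemma nth_succ (s : Finset ℕ) (i : ℕ) : nth s (i + 1) = Nat.nth (· ∈ s) i := by
  have hs : (Set.ofPred (· ∈ s)).Finite := s.finite_toSet
  rw [Nat.nth_eq_getD_sort hs, show hs.toFinset = s by ext; simp]
  rfl

lemma count_mem_eq_card_filter_lt (s : Finset ℕ) (n : ℕ) :
    Nat.count (· ∈ s) n = (s.filter (· < n)).card := by
  rw [Nat.count_eq_card_filter_range]
  congr 1
  ext x
  simp [and_comm]

lemma nth_eq_of_card_filter_lt {s : Finset ℕ} {a i : ℕ} (ha : a ∈ s)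
    (h : (s.filter (· < a)).card = i) : nth s (i + 1) = a := by
  rw [nth_succ, ← h, ← count_mem_eq_card_filter_lt]
  exact Nat.nth_count ha

lemma card_filter_lt_nth {s : Finset ℕ} {i : ℕ} (hi : i < s.card) :
    (s.filter (· < nth s (i + 1))).card = i := by
  rw [← count_mem_eq_card_filter_lt, nth_succ]
  exact Nat.count_nth_of_lt_card_finite s.finite_toSet (by simpa using hi)

lemma nth_mem {s : Finset ℕ} {i : ℕ} (h1 : 1 ≤ i) (h2 : i ≤ s.card) : nth s i ∈ s := by
  obtain ⟨i, rfl⟩ := Nat.exists_eq_add_of_le' h1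
  rw [nth_succ]
  exact Nat.nth_mem_of_lt_card s.finite_toSet (by simpa using h2)

lemma nth_le_nth_of_subset {s t : Finset ℕ} (h : s ⊆ t) {i : ℕ} (h1 : 1 ≤ i)
    (h2 : i ≤ s.card) : nth t i ≤ nth s i := by
  obtain ⟨i, rfl⟩ := Nat.exists_eq_add_of_le' h1
  have hs := card_filter_lt_nth (Nat.lt_of_succ_le h2)
  set a := nth s (i + 1)
  have hat : a ∈ t := h (nth_mem h1 h2)
  have hle : i ≤ Nat.count (· ∈ t) a := by
    rw [count_mem_eq_card_filter_lt, ← hs]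
    exact Finset.card_le_card (Finset.filter_subset_filter _ h)
  calc nth t (i + 1) ≤ Nat.nth (· ∈ t) (Nat.count (· ∈ t) a) := by
        rw [nth_succ]
        exact Nat.nth_le_nth_of_lt_card t.finite_toSet hle
          (by simpa using Nat.count_lt_card t.finite_toSet hat)
    _ = a := Nat.nth_count hat

lemma nth_image {f : ℕ → ℕ} (hf : StrictMono f) {s : Finset ℕ} {i : ℕ} (h1 : 1 ≤ i)
    (h2 : i ≤ s.card) : nth (s.image f) i = f (nth s i) := by
  obtain ⟨i, rfl⟩ := Nat.exists_eq_add_of_le' h1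
  refine nth_eq_of_card_filter_lt (Finset.mem_image_of_mem f (nth_mem h1 h2)) ?_
  refine Eq.trans ?_ (card_filter_lt_nth (Nat.lt_of_succ_le h2))
  rw [Finset.filter_image, Finset.card_image_of_injective _ hf.injective]
  simp only [hf.lt_iff_lt]

lemma nth_eq_nth_of_subset {q s : Finset ℕ} (hqs : q ⊆ s)
    (hdown : ∀ a ∈ q, ∀ b ∈ s, b ≤ a → b ∈ q) {i : ℕ} (h1 : 1 ≤ i) (h2 : i ≤ q.card) :
    nth s i = nth q i := by
  obtain ⟨i, rfl⟩ := Nat.exists_eq_add_of_le' h1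
  have ha := nth_mem h1 h2
  refine nth_eq_of_card_filter_lt (hqs ha) ?_
  refine Eq.trans ?_ (card_filter_lt_nth (Nat.lt_of_succ_le h2))
  congr 1
  ext b
  simp only [Finset.mem_filter]
  exact ⟨fun hb => ⟨hdown _ ha b hb.1 hb.2.le, hb.2⟩, fun hb => ⟨hqs hb.1, hb.2⟩⟩

lemma nth_union_of_le {v e : Finset ℕ} (hve : ∀ a ∈ v, ∀ b ∈ e, a < b) {i : ℕ} (h1 : 1 ≤ i)
    (h2 : i ≤ v.card) : nth (v ∪ e) i = nth v i :=
  nth_eq_nth_of_subset Finset.subset_union_left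
    (fun a ha b hb hba => (Finset.mem_union.1 hb).resolve_right
      fun hbe => (hve a ha b hbe).not_ge hba) h1 h2

lemma nth_union_add {v e : Finset ℕ} (hve : ∀ a ∈ v, ∀ b ∈ e, a < b) {j : ℕ} (h1 : 1 ≤ j)
    (h2 : j ≤ e.card) : nth (v ∪ e) (v.card + j) = nth e j := by
  obtain ⟨j, rfl⟩ := Nat.exists_eq_add_of_le' h1
  have hb := nth_mem h1 h2
  rw [← add_assoc]
  refine nth_eq_of_card_filter_lt (Finset.mem_union_right v hb) ?_
  have hdisj : Disjoint v (e.filter (· < nth e (j + 1))) :=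
    Finset.disjoint_left.2 fun a ha hae => (hve a ha a (Finset.mem_filter.1 hae).1).false
  rw [Finset.filter_union, Finset.filter_true_of_mem fun a ha => hve a ha _ hb,
    Finset.card_union_of_disjoint hdisj, card_filter_lt_nth (Nat.lt_of_succ_le h2)]

def IsSpreadOf (t s : Finset ℕ) : Prop :=
  t.card = s.card ∧ ∀ i, 1 ≤ i → i ≤ s.card → nth s i ≤ nth t i

lemma Spreading.mem {C : Set (Finset ℕ)} (hC : Spreading C) {s t : Finset ℕ} (hs : s ∈ C)
    (h : IsSpreadOf t s) : t ∈ C :=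
  hC s hs t h.1 h.2

lemma IsSpreadOf.union {u v w e : Finset ℕ} (hvu : IsSpreadOf v u) (huw : u ⊆ w)
    (hcard : w.card = u.card + e.card) (hve : ∀ a ∈ v, ∀ b ∈ e, a < b)
    (hwe : ∀ a ∈ w, ∀ b ∈ e, a < b) : IsSpreadOf (v ∪ e) w := by
  have hdisj : Disjoint v e := Finset.disjoint_left.2 fun a ha hae => (hve a ha a hae).false
  refine ⟨by rw [Finset.card_union_of_disjoint hdisj, hvu.1, hcard], fun i h1 h2 => ?_⟩
  rcases le_or_gt i u.card with hi | hi
  · rw [nth_union_of_le hve h1 (hvu.1 ▸ hi)]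
    exact (nth_le_nth_of_subset huw h1 hi).trans (hvu.2 i h1 hi)
  · obtain ⟨j, rfl⟩ := Nat.exists_eq_add_of_lt hi
    have htop := nth_union_add hve (j := j + 1) (by omega) (by omega)
    rw [hvu.1, ← add_assoc] at htop
    rw [htop]
    exact (hwe _ (nth_mem h1 h2) _ (nth_mem (i := j + 1) (by omega) (by omega))).le

lemma exists_ssuperset_isSpreadOf {u v w : Finset ℕ} (hvu : IsSpreadOf v u) (huw : u ⊂ w) :
    ∃ w', v ⊂ w' ∧ IsSpreadOf w' w := by
  set N := (w ∪ v).sup id + 1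
  have hN : ∀ a ∈ w ∪ v, a < N := fun a ha => Nat.lt_succ_of_le (Finset.le_sup (f := id) ha)
  set e := Finset.Ico N (N + (w.card - u.card))
  have hlt := Finset.card_lt_card huw
  have hNe : N ∈ e := Finset.mem_Ico.2 ⟨le_rfl, by omega⟩
  have habove : ∀ a ∈ w ∪ v, ∀ b ∈ e, a < b :=
    fun a ha b hb => (hN a ha).trans_le (Finset.mem_Ico.1 hb).1
  refine ⟨v ∪ e, Finset.ssubset_iff_of_subset Finset.subset_union_left |>.2
      ⟨N, Finset.mem_union_right v hNe, fun hNv => (hN N (Finset.mem_union_right w hNv)).false⟩,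
    hvu.union huw.subset (by simp [e]; omega) (fun a ha => habove a (Finset.mem_union_right w ha))
      (fun a ha => habove a (Finset.mem_union_left v ha))⟩

lemma isSpreadOf_insert {u : Finset ℕ} {a m : ℕ} (ha : a ∉ u) (ham : a < m)
    (hum : ∀ b ∈ u, b < m) : IsSpreadOf (insert m u) (insert a u) := by
  have h := (IsSpreadOf.union (e := {m}) ⟨rfl, fun _ _ _ => le_rfl⟩ (Finset.subset_insert a u)
    (by simp [Finset.card_insert_of_notMem ha]) (by simpa using hum)
    (by simpa using ⟨ham, hum⟩))
  rwa [Finset.union_comm, ← Finset.insert_eq] at h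

section RegularFamilies

variable {R F : Set (Finset ℕ)}

def SupersetRel (C : Set (Finset ℕ)) : C → C → Prop := fun s t => (t : Finset ℕ) ⊂ s

/-- The characteristic functions of an increasing chain converge to that of its union, which
must then be the characteristic function of a (finite) member of the family. -/
theorem CompactFam.wellFounded (hR : CompactFam R) : WellFounded (SupersetRel R) := by
  classical
  refine wellFounded_iff_isEmpty_descending_chain.2 ⟨fun ⟨f, hf⟩ => ?_⟩
  have hmono : Monotone fun n => (f n : Finset ℕ) := monotone_nat_of_le_succ fun n => (hf n).1
  set A := ⋃ n, ((f n : Finset ℕ) : Set ℕ)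
  have hlim : Tendsto (fun n => charFun (f n)) atTop (𝓝 fun m => decide (m ∈ A)) := by
    refine tendsto_pi_nhds.2 fun m => tendsto_nhds_of_eventually_eq ?_
    by_cases hm : m ∈ A
    · obtain ⟨n, hn⟩ := mem_iUnion.1 hm
      filter_upwards [eventually_ge_atTop n] with k hk
      simp [charFun, hm, hmono hk hn]
    · refine Eventually.of_forall fun k => ?_
      simpa [charFun, hm] using fun hk => hm (mem_iUnion.2 ⟨k, hk⟩)
  obtain ⟨t, -, ht⟩ :=
    hR.isClosed.mem_of_tendsto hlim (Eventually.of_forall fun n => ⟨f n, (f n).2, rfl⟩)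
  have hsub : ∀ n, (f n : Finset ℕ) ⊆ t := fun n m hm => by
    have := congrFun ht m
    simp only [charFun] at this
    have hmA : m ∈ A := mem_iUnion.2 ⟨n, by simpa using hm⟩
    simpa [hmA] using this
  have hcard : StrictMono fun n => (f n : Finset ℕ).card :=
    strictMono_nat_of_lt_succ fun n => Finset.card_lt_card (hf n)
  exact (hcard.id_le (t.card + 1)).not_gt (Nat.lt_succ_of_le (Finset.card_le_card (hsub _)))

theorem CompactFam.exists_maximal (hR : CompactFam R) {r : Finset ℕ} (hr : r ∈ R) :
    ∃ t, r ⊆ t ∧ Maximal (· ∈ R) t := by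
  obtain ⟨t, hrt, hmin⟩ :=
    hR.wellFounded.has_min {t | r ⊆ (t : Finset ℕ)} ⟨⟨r, hr⟩, Finset.Subset.refl r⟩
  exact ⟨t, hrt, t.2, fun v hv htv =>
    not_not.1 fun hvt => hmin ⟨v, hv⟩ (hrt.trans htv) (ssubset_of_subset_not_subset htv hvt)⟩

lemma closureFam_maximals (hR : CompactFam R) (hher : Hereditary R) :
    closureFam {s ∈ R | ∀ t ∈ R, s ⊆ t → s = t} = R := by
  ext u
  refine ⟨fun ⟨t, ht, hut⟩ => hher t ht.1 u hut, fun hu => ?_⟩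
  obtain ⟨t, hut, htR, hmax⟩ := hR.exists_maximal hu
  exact ⟨t, ⟨htR, fun v hv htv => (hmax hv htv).antisymm' htv⟩, hut⟩

theorem RegularThin.regularFam_closureFam (hF : RegularThin F) : RegularFam (closureFam F) := by
  obtain ⟨R, hR, rfl⟩ := hF
  rwa [closureFam_maximals hR.1 hR.2.1]

theorem RegularThin.mem_iff_maximal (hF : RegularThin F) {s : Finset ℕ} :
    s ∈ F ↔ Maximal (· ∈ closureFam F) s := by
  obtain ⟨R, hR, rfl⟩ := hF
  rw [closureFam_maximals hR.1 hR.2.1, maximal_iff]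
  rfl

end RegularFamilies

section Rank

/-- Junk value `0` if `u ∉ C` or `SupersetRel C` is not well founded. -/
noncomputable def famRank (C : Set (Finset ℕ)) (u : Finset ℕ) : Ordinal := by
  classical
  exact if h : WellFounded (SupersetRel C) ∧ u ∈ C then (h.1.apply ⟨u, h.2⟩).rank else 0

variable {C : Set (Finset ℕ)} {u v : Finset ℕ}

lemma famOrder_eq_famRank (F : Set (Finset ℕ)) : famOrder F = famRank (closureFam F) ∅ := by
  unfold famOrder famRank SupersetRel
  split_ifs <;> first | rfl | tauto

lemma wellFounded_and_mem_of_famRank_ne_zero (h : famRank C u ≠ 0) :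
    WellFounded (SupersetRel C) ∧ u ∈ C := by
  by_contra hC
  exact h (dif_neg hC)

lemma famRank_of_mem (hwf : WellFounded (SupersetRel C)) (hu : u ∈ C) :
    famRank C u = (hwf.apply ⟨u, hu⟩).rank :=
  dif_pos ⟨hwf, hu⟩

lemma lt_famRank_iff (hwf : WellFounded (SupersetRel C)) (hu : u ∈ C) {β : Ordinal} :
    β < famRank C u ↔ ∃ v ∈ C, u ⊂ v ∧ β ≤ famRank C v := by
  rw [famRank_of_mem hwf hu, Acc.rank_eq, Ordinal.lt_iSup_iff]
  constructor
  · rintro ⟨⟨⟨v, hv⟩, huv⟩, hβ⟩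
    exact ⟨v, hv, huv, by rw [famRank_of_mem hwf hv]; exact Order.lt_succ_iff.1 hβ⟩
  · rintro ⟨v, hv, huv, hβ⟩
    exact ⟨⟨⟨v, hv⟩, huv⟩, Order.lt_succ_iff.2 (by rwa [famRank_of_mem hwf hv] at hβ)⟩

lemma famRank_pos_iff (hwf : WellFounded (SupersetRel C)) (hu : u ∈ C) :
    0 < famRank C u ↔ ∃ v ∈ C, u ⊂ v := by
  simp [lt_famRank_iff hwf hu]

lemma famRank_lt_famRank (hwf : WellFounded (SupersetRel C)) (hu : u ∈ C) (hv : v ∈ C)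
    (huv : u ⊂ v) : famRank C v < famRank C u :=
  (lt_famRank_iff hwf hu).2 ⟨v, hv, huv, le_rfl⟩

lemma famRank_le_famRank (hwf : WellFounded (SupersetRel C)) (hu : u ∈ C) (hv : v ∈ C)
    (huv : u ⊆ v) : famRank C v ≤ famRank C u := by
  rcases huv.eq_or_ssubset with rfl | huv
  exacts [le_rfl, (famRank_lt_famRank hwf hu hv huv).le]

/-- Every strict superset of `u` spreads to a strict superset of `v`. -/
theorem famRank_le_of_isSpreadOf (hwf : WellFounded (SupersetRel C)) (hC : Spreading C)
    (hu : u ∈ C) (hvu : IsSpreadOf v u) : famRank C u ≤ famRank C v := by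
  suffices ∀ x : C, ∀ v, IsSpreadOf v x → famRank C x ≤ famRank C v from this ⟨u, hu⟩ v hvu
  intro x
  induction x using hwf.induction with
  | _ x ih =>
  intro v hvx
  refine le_of_forall_lt fun β hβ => ?_
  obtain ⟨w, hw, hxw, hβw⟩ := (lt_famRank_iff hwf x.2).1 hβ
  obtain ⟨w', hvw', hw'w⟩ := exists_ssuperset_isSpreadOf hvx hxw
  exact (lt_famRank_iff hwf (hC.mem x.2 hvx)).2
    ⟨w', hC.mem hw hw'w, hvw', hβw.trans (ih ⟨w, hw⟩ hxw w' hw'w)⟩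

/-- Spread a one-point extension `insert a u` of rank `≥ β`. -/
theorem eventually_insert_mem_and_le_famRank (hher : Hereditary C) (hspr : Spreading C)
    {β : Ordinal} (hβ : β < famRank C u) :
    ∀ᶠ m in atTop, insert m u ∈ C ∧ β ≤ famRank C (insert m u) := by
  obtain ⟨hwf, hu⟩ := wellFounded_and_mem_of_famRank_ne_zero hβ.ne_bot
  obtain ⟨v, hv, huv, hβv⟩ := (lt_famRank_iff hwf hu).1 hβ
  obtain ⟨a, hav, hau⟩ := Finset.exists_of_ssubset huv
  have hw : insert a u ∈ C := hher v hv _ (Finset.insert_subset hav huv.subset)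
  have hβw : β ≤ famRank C (insert a u) :=
    hβv.trans (famRank_le_famRank hwf hw hv (Finset.insert_subset hav huv.subset))
  filter_upwards [eventually_gt_atTop (max a (u.sup id))] with m hm
  have hspread : IsSpreadOf (insert m u) (insert a u) :=
    isSpreadOf_insert hau (le_max_left _ _ |>.trans_lt hm)
      fun b hb => (Finset.le_sup (f := id) hb).trans_lt ((le_max_right _ _).trans_lt hm)
  exact ⟨hspr.mem hw hspread, hβw.trans (famRank_le_of_isSpreadOf hwf hspr hw hspread)⟩

end Rank

theorem exists_strictMono_forall_eventually {M : ℕ → ℕ} (hM : StrictMono M)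
    {P : ℕ → Finset ℕ → ℕ → Prop} (hP : ∀ n S, ∀ᶠ m in atTop, P n S m) :
    ∃ φ : ℕ → ℕ, StrictMono φ ∧ ∀ n, P n ((Finset.range n).image (M ∘ φ)) (M (φ n)) := by
  classical
  choose next hnext_gt hnext using fun n S k₀ =>
    ((eventually_gt_atTop k₀).and (hM.tendsto_atTop.eventually (hP n S))).exists
  -- `seq n` is the `n`-th index together with the set of the previous terms.
  let seq : ℕ → ℕ × Finset ℕ := fun n => Nat.rec (next 0 ∅ 0, ∅)
    (fun n p => (next (n + 1) (insert (M p.1) p.2) p.1, insert (M p.1) p.2)) n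
  have hprev : ∀ n, (seq n).2 = (Finset.range n).image (M ∘ fun k => (seq k).1) := by
    intro n
    induction n with
    | zero => rfl
    | succ n ih =>
      change insert _ (seq n).2 = _
      rw [ih, Finset.range_add_one, Finset.image_insert]
      rfl
  refine ⟨fun n => (seq n).1, strictMono_nat_of_lt_succ fun n => hnext_gt _ _ _, fun n => ?_⟩
  rw [← hprev]
  cases n
  exacts [hnext _ _ _, hnext _ _ _]

def IsExtending (C : Set (Finset ℕ)) (θ : ℕ → ℕ) : Prop :=
  ∀ π w, w ⊆ (Finset.range π).image θ → 0 < famRank C w → insert (θ π) w ∈ C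

theorem exists_isExtending {C : Set (Finset ℕ)} (hher : Hereditary C) (hspr : Spreading C)
    {M : ℕ → ℕ} (hM : StrictMono M) : ∃ φ, StrictMono φ ∧ IsExtending C (M ∘ φ) := by
  obtain ⟨φ, hφ, hP⟩ := exists_strictMono_forall_eventually hM
    (P := fun _ S m => ∀ w ∈ S.powerset, 0 < famRank C w → insert m w ∈ C)
    fun _ S => (eventually_all_finset _).2 fun _ _ => eventually_imp_distrib_left.2 fun hw =>
      (eventually_insert_mem_and_le_famRank hher hspr hw).mono fun _ h => h.1
  exact ⟨φ, hφ, fun π w hw => hP π w (Finset.mem_powerset.2 hw)⟩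

def RankDominates (CG CF : Set (Finset ℕ)) (θ L : ℕ → ℕ) : Prop :=
  ∀ q : Finset ℕ, q.image θ ∈ CG →
    q.image L ∈ CF ∧ famRank CG (q.image θ) ≤ famRank CF (q.image L)

/-- Choose `L π` so that adding it to any set of earlier terms keeps the rank above that of
the corresponding `θ`-set; the ranks then compare by induction on the largest position. -/
theorem exists_rankDominates {CG CF : Set (Finset ℕ)} (hwfG : WellFounded (SupersetRel CG))
    (hherG : Hereditary CG) (hherF : Hereditary CF) (hsprF : Spreading CF) {θ : ℕ → ℕ}
    (hθ : StrictMono θ) {M : ℕ → ℕ} (hM : StrictMono M) (hF : ∅ ∈ CF)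
    (hrank : famRank CG ∅ ≤ famRank CF ∅) :
    ∃ φ, StrictMono φ ∧ RankDominates CG CF θ (M ∘ φ) := by
  classical
  obtain ⟨φ, hφ, hP⟩ := exists_strictMono_forall_eventually hM
    (P := fun π S m => ∀ u ∈ S.powerset, ∀ q ∈ (Finset.range π).powerset,
      famRank CG (insert (θ π) (q.image θ)) < famRank CF u →
        insert m u ∈ CF ∧ famRank CG (insert (θ π) (q.image θ)) ≤ famRank CF (insert m u))
    fun _ _ => (eventually_all_finset _).2 fun _ _ => (eventually_all_finset _).2 fun _ _ =>
      eventually_imp_distrib_left.2 (eventually_insert_mem_and_le_famRank hherF hsprF)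
  refine ⟨φ, hφ, fun q => ?_⟩
  induction q using Finset.induction_on_max with
  | empty => simpa using fun _ => ⟨hF, hrank⟩
  | insert π q hlt ih =>
    intro hq
    simp only [Finset.image_insert] at hq ⊢
    have hqG : q.image θ ∈ CG := hherG _ hq _ (Finset.subset_insert _ _)
    have hnew : θ π ∉ q.image θ := by
      simpa using fun j hj => (hθ (hlt j hj)).ne
    have hqπ : q ⊆ Finset.range π := fun j hj => Finset.mem_range.2 (hlt j hj)
    exact hP π _ (Finset.mem_powerset.2 (Finset.image_subset_image hqπ)) q
      (Finset.mem_powerset.2 hqπ)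
      ((famRank_lt_famRank hwfG hqG hq (Finset.ssubset_insert hnew)).trans_le (ih hqG).2)

section Greedy

open scoped Classical

variable {C CF : Set (Finset ℕ)} {θ L : ℕ → ℕ} {t : Finset ℕ} {i j j' : ℕ}

/-- `L⁻¹(t)`; the bound `t.sup id` suffices for strictly increasing `L`, as then `j ≤ L j`. -/
def positions (L : ℕ → ℕ) (t : Finset ℕ) : Finset ℕ :=
  (Finset.range (t.sup id + 1)).filter fun j => L j ∈ t

lemma mem_positions (hL : StrictMono L) : j ∈ positions L t ↔ L j ∈ t := by
  rw [positions, Finset.mem_filter, Finset.mem_range, and_iff_right_iff_imp]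
  exact fun h => Nat.lt_succ_of_le (hL.id_le j |>.trans (Finset.le_sup (f := id) h))

lemma image_positions (hL : StrictMono L) (ht : ↑t ⊆ Set.range L) :
    (positions L t).image L = t := by
  ext a
  simp only [Finset.mem_image, mem_positions hL]
  refine ⟨fun ⟨j, hj, hja⟩ => hja ▸ hj, fun ha => ?_⟩
  obtain ⟨j, rfl⟩ := ht ha
  exact ⟨j, ha, rfl⟩

lemma card_positions (hL : StrictMono L) (ht : ↑t ⊆ Set.range L) :
    (positions L t).card = t.card := by
  conv_rhs => rw [← image_positions hL ht]
  exact (Finset.card_image_of_injective _ hL.injective).symm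

lemma nth_eq_apply_nth_positions (hL : StrictMono L) (ht : ↑t ⊆ Set.range L) (h1 : 1 ≤ i)
    (h2 : i ≤ t.card) : nth t i = L (nth (positions L t) i) := by
  conv_lhs => rw [← image_positions hL ht]
  exact nth_image hL h1 (by rwa [card_positions hL ht])

/-- The positions of the longest initial segment of `t` whose `θ`-copy lies in `C`. -/
noncomputable def greedyPositions (C : Set (Finset ℕ)) (θ L : ℕ → ℕ) (t : Finset ℕ) : Finset ℕ :=
  (positions L t).filter fun j => ((positions L t).filter (· ≤ j)).image θ ∈ C

noncomputable def greedyMap (C : Set (Finset ℕ)) (θ L : ℕ → ℕ) (t : Finset ℕ) : Finset ℕ :=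
  (greedyPositions C θ L t).image θ

lemma greedyPositions_subset : greedyPositions C θ L t ⊆ positions L t :=
  Finset.filter_subset _ _

lemma mem_greedyPositions : j ∈ greedyPositions C θ L t ↔
    j ∈ positions L t ∧ ((positions L t).filter (· ≤ j)).image θ ∈ C :=
  Finset.mem_filter

lemma mem_greedyPositions_of_le (hher : Hereditary C) (hj : j ∈ greedyPositions C θ L t)
    (hj' : j' ∈ positions L t) (hle : j' ≤ j) : j' ∈ greedyPositions C θ L t := by
  refine mem_greedyPositions.2 ⟨hj', hher _ (mem_greedyPositions.1 hj).2 _ ?_⟩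
  refine Finset.image_subset_image fun x hx => ?_
  rw [Finset.mem_filter] at hx ⊢
  exact ⟨hx.1, hx.2.trans hle⟩

lemma greedyMap_mem (hher : Hereditary C) (h0 : ∅ ∈ C) : greedyMap C θ L t ∈ C := by
  rcases (greedyPositions C θ L t).eq_empty_or_nonempty with he | hne
  · simpa [greedyMap, he] using h0
  · have hmax := Finset.max'_mem _ hne
    rw [greedyMap]
    convert (mem_greedyPositions.1 hmax).2 using 2
    ext j
    simp only [Finset.mem_filter]
    exact ⟨fun hj => ⟨greedyPositions_subset hj, Finset.le_max' _ j hj⟩,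
      fun hj => mem_greedyPositions_of_le hher hmax hj.1 hj.2⟩

lemma min_mem_greedyPositions (hext : IsExtending C θ) (h0 : 0 < famRank C ∅)
    (hne : (positions L t).Nonempty) : (positions L t).min' hne ∈ greedyPositions C θ L t := by
  refine mem_greedyPositions.2 ⟨Finset.min'_mem _ hne, ?_⟩
  set j₁ := (positions L t).min' hne
  have hmin : (positions L t).filter (· ≤ j₁) = {j₁} := by
    ext j
    rw [Finset.mem_filter, Finset.mem_singleton]
    refine ⟨fun hj => hj.2.antisymm (Finset.min'_le _ j hj.1), ?_⟩
    rintro rfl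
    exact ⟨Finset.min'_mem _ hne, le_rfl⟩
  rw [hmin, Finset.image_singleton]
  simpa using hext _ ∅ (Finset.empty_subset _) h0

/-- At the first skipped position `j₀`, `IsExtending` would have allowed adding `θ j₀`. -/
lemma greedyPositions_eq_positions (hher : Hereditary C) (hext : IsExtending C θ)
    (hpos : 0 < famRank C (greedyMap C θ L t)) : greedyPositions C θ L t = positions L t := by
  by_contra hne
  have hdiff : (positions L t \ greedyPositions C θ L t).Nonempty :=
    Finset.sdiff_nonempty.2 fun h => hne (greedyPositions_subset.antisymm h)
  set j₀ := (positions L t \ greedyPositions C θ L t).min' hdiff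
  obtain ⟨hj₀, hj₀g⟩ := Finset.mem_sdiff.1 (Finset.min'_mem _ hdiff)
  have hbelow : ∀ j ∈ greedyPositions C θ L t, j < j₀ := fun j hj =>
    lt_of_not_ge fun hle => hj₀g (mem_greedyPositions_of_le hher hj hj₀ hle)
  have hseg : (positions L t).filter (· ≤ j₀) = insert j₀ (greedyPositions C θ L t) := by
    ext j
    simp only [Finset.mem_filter, Finset.mem_insert]
    refine ⟨fun ⟨hj, hle⟩ => or_iff_not_imp_right.2 fun hjg => hle.antisymm
      (Finset.min'_le _ j (Finset.mem_sdiff.2 ⟨hj, hjg⟩)), ?_⟩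
    rintro (rfl | hj)
    exacts [⟨hj₀, le_rfl⟩, ⟨greedyPositions_subset hj, (hbelow j hj).le⟩]
  refine hj₀g (mem_greedyPositions.2 ⟨hj₀, ?_⟩)
  rw [hseg, Finset.image_insert]
  exact hext j₀ _ (Finset.image_subset_image fun j hj => Finset.mem_range.2 (hbelow j hj)) hpos

/-- Otherwise all of `t` was transported, and rank domination would give `t` a proper
extension in `CF`. -/
theorem maximal_greedyMap (hwf : WellFounded (SupersetRel C)) (hher : Hereditary C)
    (h0 : ∅ ∈ C) (hext : IsExtending C θ) (hdom : RankDominates C CF θ L) (hL : StrictMono L)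
    (ht : ↑t ⊆ Set.range L) (hmax : Maximal (· ∈ CF) t) : Maximal (· ∈ C) (greedyMap C θ L t) := by
  refine ⟨greedyMap_mem hher h0, fun v hv hsub => not_not.1 fun hvs => ?_⟩
  have hpos : 0 < famRank C (greedyMap C θ L t) :=
    (famRank_pos_iff hwf (greedyMap_mem hher h0)).2 ⟨v, hv, ssubset_of_subset_not_subset hsub hvs⟩
  have hall : greedyMap C θ L t = (positions L t).image θ := by
    rw [greedyMap, greedyPositions_eq_positions hher hext hpos]
  have hle := (hdom (positions L t) (hall ▸ greedyMap_mem hher h0)).2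
  rw [image_positions hL ht, ← hall] at hle
  obtain ⟨hwfF, htF⟩ := wellFounded_and_mem_of_famRank_ne_zero (hpos.trans_le hle).ne'
  obtain ⟨w, hw, htw⟩ := (famRank_pos_iff hwfF htF).1 (hpos.trans_le hle)
  exact htw.2 (hmax.2 hw htw.1)

lemma card_greedyMap (hθ : StrictMono θ) :
    (greedyMap C θ L t).card = (greedyPositions C θ L t).card :=
  Finset.card_image_of_injective _ hθ.injective

lemma card_greedyMap_le (hθ : StrictMono θ) (hL : StrictMono L) (ht : ↑t ⊆ Set.range L) :
    (greedyMap C θ L t).card ≤ t.card := by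
  rw [card_greedyMap hθ, ← card_positions hL ht]
  exact Finset.card_le_card greedyPositions_subset

lemma nth_greedyMap (hher : Hereditary C) (hθ : StrictMono θ) (h1 : 1 ≤ i)
    (h2 : i ≤ (greedyMap C θ L t).card) :
    nth (greedyMap C θ L t) i = θ (nth (positions L t) i) := by
  rw [card_greedyMap hθ] at h2
  rw [greedyMap, nth_image hθ h1 h2, nth_eq_nth_of_subset greedyPositions_subset
    (fun _ ha _ hb hba => mem_greedyPositions_of_le hher ha hb hba) h1 h2]

lemma greedyMap_nonempty (hext : IsExtending C θ) (h0 : 0 < famRank C ∅) (hL : StrictMono L)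
    (ht : ↑t ⊆ Set.range L) (hne : t.Nonempty) : (greedyMap C θ L t).Nonempty := by
  have hpos : (positions L t).Nonempty := by
    rw [← Finset.card_pos, card_positions hL ht]
    exact hne.card_pos
  exact ⟨_, Finset.mem_image_of_mem θ (min_mem_greedyPositions hext h0 hpos)⟩

lemma exists_nth_one_greedyMap (hher : Hereditary C) (hext : IsExtending C θ)
    (h0 : 0 < famRank C ∅) (hθ : StrictMono θ) (hL : StrictMono L) (ht : ↑t ⊆ Set.range L) (hne : t.Nonempty) :
    ∃ p, nth t 1 = L p ∧ nth (greedyMap C θ L t) 1 = θ p :=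
  ⟨_, nth_eq_apply_nth_positions hL ht le_rfl hne.card_pos,
    nth_greedyMap hher hθ le_rfl (greedyMap_nonempty hext h0 hL ht hne).card_pos⟩

/-- A truncation of a plegma tuple whose entries are relabelled monotonically is plegma. -/
lemma IsPlegma.of_nth_lt {k : ℕ} {s s' : ℕ → Finset ℕ} (hs : IsPlegma k s)
    (hne : ∀ j < k, (s' j).Nonempty) (hcard : ∀ j < k, (s' j).card ≤ (s j).card)
    (hlt : ∀ j < k, ∀ j' < k, ∀ i i', 1 ≤ i → i ≤ (s' j).card → 1 ≤ i' → i' ≤ (s' j').card →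
      nth (s j) i < nth (s j') i' → nth (s' j) i < nth (s' j') i') : IsPlegma k s' := by
  obtain ⟨-, hcol, hdiag⟩ := hs
  refine ⟨hne, fun j j' hjj' hj' r h1 h2 => ?_, fun j hj j' hj' r h1 h2 => ?_⟩
  · have hj := hjj'.trans hj'
    simp only [le_min_iff] at h2
    exact hlt j hj j' hj' r r h1 h2.1 h1 h2.2 (hcol j j' hjj' hj' r h1
      (le_min (h2.1.trans (hcard j hj)) (h2.2.trans (hcard j' hj'))))
  · simp only [le_min_iff] at h2
    exact hlt j hj j' hj' r (r + 1) h1 h2.1 (by omega) (by omega) (hdiag j hj j' hj' r h1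
      (le_min (h2.1.trans (hcard j hj)) (by have := hcard j' hj'; omega)))

theorem isPlegma_greedyMap (hher : Hereditary C) (hext : IsExtending C θ) (h0 : 0 < famRank C ∅)
    (hθ : StrictMono θ) (hL : StrictMono L) {k : ℕ} {s : ℕ → Finset ℕ}
    (hsL : ∀ j < k, ↑(s j) ⊆ Set.range L) (hs : IsPlegma k s) :
    IsPlegma k fun j => greedyMap C θ L (s j) := by
  have hcard := fun j hj => card_greedyMap_le (C := C) hθ hL (hsL j hj)
  refine hs.of_nth_lt (fun j hj => greedyMap_nonempty hext h0 hL (hsL j hj) (hs.1 j hj)) hcard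
    fun j hj j' hj' i i' h1 h2 h1' h2' hlt => ?_
  rw [nth_eq_apply_nth_positions hL (hsL j hj) h1 (h2.trans (hcard j hj)),
    nth_eq_apply_nth_positions hL (hsL j' hj') h1' (h2'.trans (hcard j' hj'))] at hlt
  rw [nth_greedyMap hher hθ h1 h2, nth_greedyMap hher hθ h1' h2']
  exact hθ (hL.lt_iff_lt.1 hlt)

lemma continuous_of_forall_mem_iff {g : Finset ℕ → Finset ℕ}
    (hg : ∀ n, ∃ B, ∀ t t', (∀ i ≤ B, i ∈ t ↔ i ∈ t') → (n ∈ g t ↔ n ∈ g t')) :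
    Continuous g := by
  refine continuous_induced_rng.2 (continuous_pi fun n => ?_)
  obtain ⟨B, hB⟩ := hg n
  refine (IsLocallyConstant.iff_eventually_eq _).2 (fun t => ?_) |>.continuous
  have hcoord : ∀ i, ∀ᶠ t' in 𝓝 t, charFun t' i = charFun t i := fun i =>
    ((continuous_apply i).comp (continuous_induced_dom (f := charFun))).continuousAt
      |>.preimage_mem_nhds ((isOpen_discrete {charFun t i}).mem_nhds rfl)
  filter_upwards [(Finset.range (B + 1)).eventually_all.2 fun i _ => hcoord i] with t' ht'
  simp only [Function.comp_apply, charFun, decide_eq_decide]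
  refine hB t' t fun i hi => ?_
  simpa [charFun] using ht' i (Finset.mem_range.2 (Nat.lt_succ_of_le hi))

theorem continuous_greedyMap (hθ : StrictMono θ) (hL : StrictMono L) :
    Continuous (greedyMap C θ L) := by
  refine continuous_of_forall_mem_iff fun n => ⟨L n, fun t t' hagree => ?_⟩
  have hpos : ∀ j ≤ n, ∀ j' ≤ j, j' ∈ positions L t ↔ j' ∈ positions L t' := fun j hj j' hj' => by
    rw [mem_positions hL, mem_positions hL]
    exact hagree _ (hL.monotone (hj'.trans hj))
  have hgreedy : ∀ j ≤ n, j ∈ greedyPositions C θ L t ↔ j ∈ greedyPositions C θ L t' := by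
    intro j hj
    have hseg : (positions L t).filter (· ≤ j) = (positions L t').filter (· ≤ j) := by
      ext j'
      simp only [Finset.mem_filter]
      exact ⟨fun h => ⟨(hpos j hj j' h.2).1 h.1, h.2⟩, fun h => ⟨(hpos j hj j' h.2).2 h.1, h.2⟩⟩
    rw [mem_greedyPositions, mem_greedyPositions, hseg, hpos j hj j le_rfl]
  simp only [greedyMap, Finset.mem_image]
  exact exists_congr fun j => ⟨fun ⟨hj, hjn⟩ => ⟨(hgreedy j (hjn ▸ hθ.id_le j)).1 hj, hjn⟩,
    fun ⟨hj, hjn⟩ => ⟨(hgreedy j (hjn ▸ hθ.id_le j)).2 hj, hjn⟩⟩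

end Greedy

section Transfer

lemma RegularThin.nonempty_of_mem {F : Set (Finset ℕ)} (hF : RegularThin F) (h : famOrder F ≠ 0)
    {s : Finset ℕ} (hs : s ∈ F) : s.Nonempty := by
  rw [famOrder_eq_famRank] at h
  obtain ⟨hwf, h0⟩ := wellFounded_and_mem_of_famRank_ne_zero h
  obtain ⟨v, hv, hsv⟩ := (famRank_pos_iff hwf h0).1 (pos_iff_ne_zero.2 h)
  refine Finset.nonempty_iff_ne_empty.2 fun hempty => hsv.2 ?_
  rw [hempty] at hs
  exact (hF.mem_iff_maximal.1 hs).2 hv hsv.1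

structure IsTransfer (F : Set (Finset ℕ)) (L : ℕ → ℕ) (G : Set (Finset ℕ)) (M : ℕ → ℕ)
    (ψ : Finset ℕ → Finset ℕ) : Prop where
  continuous : Continuous ψ
  mapsTo_closureFam : ∀ t ∈ closureFam F, ↑t ⊆ Set.range L →
    ψ t ∈ closureFam G ∧ ↑(ψ t) ⊆ Set.range M
  mapsTo : ∀ s : Finset ℕ, s ∈ restrict F L → ψ s ∈ restrict G M
  isPlegma : ∀ (k : ℕ) (s : ℕ → Finset ℕ), (∀ j < k, s j ∈ restrict F L) → IsPlegma k s →
    IsPlegma k (ψ ∘ s)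
  le_nth_one : ∀ s : Finset ℕ, s ∈ restrict F L → ∀ l, L l ≤ nth s 1 → M l ≤ nth (ψ s) 1

variable {F G : Set (Finset ℕ)} {L M : ℕ → ℕ} {ψ : Finset ℕ → Finset ℕ}

lemma Subordinated.comp {E : Type*} [NormedAddCommGroup E] {x : Finset ℕ → E}
    (hx : Subordinated G M x) (hψ : IsTransfer F L G M ψ) : Subordinated F L (x ∘ ψ) := by
  obtain ⟨φ, hφ, hφx⟩ := hx
  have hψ' : Continuous fun t : {t // t ∈ closureFam F ∧ ↑t ⊆ Set.range L} =>
      (⟨ψ t, hψ.mapsTo_closureFam t.1 t.2.1 t.2.2⟩ : {t // t ∈ closureFam G ∧ ↑t ⊆ Set.range M}) :=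
    (hψ.continuous.comp continuous_subtype_val).subtype_mk _
  exact ⟨φ ∘ ψ, hφ.comp hψ', fun s hs => hφx _ (hψ.mapsTo s hs)⟩

variable {x : Finset ℕ → X}

lemma WeaklyNull.comp (hx : WeaklyNull G M x) (hψ : IsTransfer F L G M ψ) (hM : StrictMono M) :
    WeaklyNull F L (x ∘ ψ) := by
  intro f ε hε
  obtain ⟨n₀, hn₀⟩ := hx f ε hε
  exact ⟨L n₀, fun s hs hle =>
    hn₀ _ (hψ.mapsTo s hs) ((hM.id_le n₀).trans (hψ.le_nth_one s hs n₀ hle))⟩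

lemma Generates.comp {δ : ℕ → ℝ} {ρ : Seminorm ℝ (ℕ →₀ ℝ)} (hx : Generates G M x δ ρ)
    (hψ : IsTransfer F L G M ψ) : Generates F L (x ∘ ψ) δ ρ :=
  fun k l hk hkl a ha s hs hpl hmin =>
    hx k l hk hkl a ha (ψ ∘ s) (fun j hj => hψ.mapsTo _ (hs j hj)) (hψ.isPlegma k s hs hpl)
      (hψ.le_nth_one _ (hs 0 (by omega)) l hmin)

theorem exists_isTransfer (hF : RegularThin F) (hG : RegularThin G) (hG0 : famOrder G ≠ 0)
    (hord : famOrder G ≤ famOrder F) {M M' : ℕ → ℕ} (hM : StrictMono M) (hM' : StrictMono M') :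
    ∃ L, StrictMono L ∧ Set.range L ⊆ Set.range M ∧ ∃ ψ, IsTransfer F L G M' ψ := by
  obtain ⟨-, hherF, hsprF⟩ := hF.regularFam_closureFam
  obtain ⟨hcompG, hherG, hsprG⟩ := hG.regularFam_closureFam
  have hF0 : famOrder F ≠ 0 := (pos_iff_ne_zero.2 hG0 |>.trans_le hord).ne'
  simp only [famOrder_eq_famRank] at hG0 hF0 hord
  have hemptyG := (wellFounded_and_mem_of_famRank_ne_zero hG0).2
  have hemptyF := (wellFounded_and_mem_of_famRank_ne_zero hF0).2
  obtain ⟨φ, hφ, hext⟩ := exists_isExtending hherG hsprG hM'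
  have hθ := hM'.comp hφ
  obtain ⟨σ, hσ, hdom⟩ :=
    exists_rankDominates hcompG.wellFounded hherG hherF hsprF hθ hM hemptyF hord
  have hL := hM.comp hσ
  have hrange : ∀ t, ↑(greedyMap (closureFam G) (M' ∘ φ) (M ∘ σ) t) ⊆ Set.range M' := by
    intro t a ha
    obtain ⟨j, -, rfl⟩ := Finset.mem_image.1 ha
    exact ⟨φ j, rfl⟩
  refine ⟨M ∘ σ, hL, Set.range_comp_subset_range _ _, greedyMap (closureFam G) (M' ∘ φ) (M ∘ σ),
    continuous_greedyMap hθ hL, fun t _ _ => ⟨greedyMap_mem hherG hemptyG, hrange t⟩,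
    fun s hs => ⟨?_, hrange s⟩, fun k s hs hpl => ?_, fun s hs l hl => ?_⟩
  · exact hG.mem_iff_maximal.2 (maximal_greedyMap hcompG.wellFounded hherG hemptyG hext hdom hL
      hs.2 (hF.mem_iff_maximal.1 hs.1))
  · exact isPlegma_greedyMap hherG hext (pos_iff_ne_zero.2 hG0) hθ hL (fun j hj => (hs j hj).2) hpl
  · obtain ⟨p, hsp, hψp⟩ := exists_nth_one_greedyMap hherG hext (pos_iff_ne_zero.2 hG0) hθ hL hs.2
      (hF.nonempty_of_mem (by rwa [famOrder_eq_famRank]) hs.1)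
    rw [hψp]
    exact hM'.monotone ((hL.le_iff_le.1 (hsp ▸ hl)).trans (hφ.id_le p))

end Transfer

theorem statement2_general {X : Type*} [NormedAddCommGroup X] [NormedSpace ℝ X]
    (ξ : Ordinal) (hξ1 : 1 ≤ ξ)
    (ρ : Seminorm ℝ (ℕ →₀ ℝ)) (hρ : SMw ξ X ρ)
    (F : Set (Finset ℕ)) (hF : RegularThin F) (hord : ξ ≤ famOrder F)
    (M : ℕ → ℕ) (hM : StrictMono M) :
    ∃ L : ℕ → ℕ, StrictMono L ∧ Set.range L ⊆ Set.range M ∧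
      ∃ x : Finset ℕ → X, ∃ δ : ℕ → ℝ, NullPos δ ∧
        Subordinated F L x ∧ WeaklyNull F L x ∧ Generates F L x δ ρ := by
  obtain ⟨G, hG, rfl, M', hM', x, δ, hδ, hsub, hnull, hgen⟩ := hρ
  obtain ⟨L, hL, hLM, ψ, hψ⟩ :=
    exists_isTransfer hF hG (Order.one_le_iff_ne_zero.1 hξ1) hord hM hM'
  exact ⟨L, hL, hLM, x ∘ ψ, δ, hδ, hsub.comp hψ, hnull.comp hψ hM', hgen.comp hψ⟩

/-- Corollary 8. -/
theorem statement2 {X : Type*} [NormedAddCommGroup X] [NormedSpace ℝ X] [CompleteSpace X]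
    (ξ : Ordinal) (hξ1 : 1 ≤ ξ) (hξc : ξ < (Cardinal.aleph 1).ord)
    (ρ : Seminorm ℝ (ℕ →₀ ℝ)) (hρ : SMw ξ X ρ)
    (F : Set (Finset ℕ)) (hF : RegularThin F) (hord : ξ ≤ famOrder F)
    (M : ℕ → ℕ) (hM : StrictMono M) :
    ∃ L : ℕ → ℕ, StrictMono L ∧ Set.range L ⊆ Set.range M ∧
      ∃ x : Finset ℕ → X, ∃ δ : ℕ → ℝ, NullPos δ ∧
        Subordinated F L x ∧ WeaklyNull F L x ∧ Generates F L x δ ρ :=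
  statement2_general ξ hξ1 ρ hρ F hF hord M hM
end

section
/- Let X be a Banach space, ℱ a regular thin family, k ∈ ℕ, and (x_s^1)_{s∈ℱ},…,(x_s^k)_{s∈ℱ} bounded ℱ-sequences in X. Then for every infinite subset M of ℕ there exists an infinite subset L of M such that the k-tuple ((x_s^i)_{s∈ℱ↾L})_{i=1}^k generates some sequence (e_n)_n (i.e., some seminorm on c00) as a joint ℱ-model with respect to some null sequence of positive reals. -/
open Set Filter Topology

variable {X : Type*} [NormedAddCommGroup X] [NormedSpace ℝ X]

/-! Rigidity: if the union of one plegma tuple of members of an antichain is an initial segment of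
the union of another, the two tuples coincide. Hence Galvin's lemma on initial segments of
infinite sets yields Ramsey's theorem for plegma tuples. Colouring tuples by the norms of finitely
many combinations (an ε-net of the coefficient cube) gives, for every `n`, an infinite set on which
all plegma tuples of length at most `n` have norms within `1 / (n + 1)` of each other, and a
diagonal sequence `ℓ` does this for all `n` at once. The seminorm is the limit, along an
ultrafilter, of the seminorms of plegma tuples lying deeper and deeper in `ℓ` and of the largest
available length; tuple lengths that occur only down to a finite depth are absorbed by the first
terms of `δ`. -/

section Nth

lemma nth_empty (k : ℕ) : nth ∅ k = 0 := by
  simp [nth]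

lemma sort_eq_min'_cons (s : Finset ℕ) (h : s.Nonempty) :
    s.sort (· ≤ ·) = s.min' h :: (s.erase (s.min' h)).sort (· ≤ ·) := by
  conv_lhs => rw [← Finset.insert_erase (s.min'_mem h)]
  exact Finset.sort_insert _ (fun b hb => s.min'_le b (Finset.mem_of_mem_erase hb))
    (Finset.notMem_erase _ _)

lemma nth_one_eq_min' {s : Finset ℕ} (h : s.Nonempty) : nth s 1 = s.min' h := by
  simp [nth, sort_eq_min'_cons s h]

lemma nth_one_mem {s : Finset ℕ} (h : s.Nonempty) : nth s 1 ∈ s := by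
  rw [nth_one_eq_min' h]; exact s.min'_mem h

lemma nth_one_le {s : Finset ℕ} {y : ℕ} (hy : y ∈ s) : nth s 1 ≤ y := by
  rw [nth_one_eq_min' ⟨y, hy⟩]; exact s.min'_le y hy

noncomputable def dropMin (s : Finset ℕ) : Finset ℕ := s.erase (nth s 1)

lemma mem_dropMin {s : Finset ℕ} {y : ℕ} : y ∈ dropMin s ↔ y ≠ nth s 1 ∧ y ∈ s :=
  Finset.mem_erase

lemma insert_nth_one_dropMin {s : Finset ℕ} (h : s.Nonempty) : insert (nth s 1) (dropMin s) = s :=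
  Finset.insert_erase (nth_one_mem h)

lemma card_dropMin (s : Finset ℕ) : (dropMin s).card = s.card - 1 := by
  rcases s.eq_empty_or_nonempty with rfl | h
  · simp [dropMin]
  · rw [dropMin, Finset.card_erase_of_mem (nth_one_mem h)]

lemma nth_dropMin (s : Finset ℕ) {k : ℕ} (hk : 1 ≤ k) : nth (dropMin s) k = nth s (k + 1) := by
  rcases s.eq_empty_or_nonempty with rfl | h
  · simp [dropMin, nth_empty]
  · obtain ⟨k, rfl⟩ := Nat.exists_eq_add_of_le' hk
    simp [nth, dropMin, sort_eq_min'_cons s h]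

lemma nth_two_le {s : Finset ℕ} {y : ℕ} (hy : y ∈ dropMin s) : nth s 2 ≤ y := by
  simpa [nth_dropMin s le_rfl] using nth_one_le hy

lemma two_le_card_of_mem_dropMin {s : Finset ℕ} {y : ℕ} (hy : y ∈ dropMin s) : 2 ≤ s.card := by
  have := Finset.card_pos.2 ⟨y, hy⟩
  rw [card_dropMin] at this
  omega

end Nth

section InitialSegment

lemma IsInitialSegment.trans {a b c : Finset ℕ} (hab : IsInitialSegment a b)
    (hbc : IsInitialSegment b c) : IsInitialSegment a c := by
  refine ⟨hab.1.trans hbc.1, fun y hy z hz hza => ?_⟩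
  by_cases hzb : z ∈ b
  · exact hab.2 y hy z hzb hza
  · exact hbc.2 y (hab.1 hy) z hz hzb

lemma IsInitialSegment.eq_of_card_eq {r r' u : Finset ℕ} (h : IsInitialSegment r u)
    (h' : IsInitialSegment r' u) (hc : r.card = r'.card) : r = r' := by
  by_cases hsub : r' ⊆ r
  · exact (Finset.eq_of_subset_of_card_le hsub hc.le).symm
  obtain ⟨a, ha, har⟩ := Finset.not_subset.1 hsub
  have hrr' : r ⊂ r' := ⟨fun b hb => by_contra fun hbr' =>
    absurd (h.2 b hb a (h'.1 ha) har) (h'.2 a ha b (h.1 hb) hbr').asymm, fun h'' => har (h'' ha)⟩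
  exact absurd hc (Finset.card_lt_card hrr').ne

lemma IsInitialSegment.sdiff {a b : Finset ℕ} (h : IsInitialSegment a b) (r : Finset ℕ) :
    IsInitialSegment (a \ r) (b \ r) :=
  ⟨Finset.sdiff_subset_sdiff h.1 le_rfl, fun y hy z hz hza =>
    h.2 y (Finset.mem_sdiff.1 hy).1 z (Finset.mem_sdiff.1 hz).1
      fun hza' => hza (Finset.mem_sdiff.2 ⟨hza', (Finset.mem_sdiff.1 hz).2⟩)⟩

def IsPrefixOf (u : Finset ℕ) (X : Set ℕ) : Prop :=
  ↑u ⊆ X ∧ ∀ x ∈ X, x ∉ u → ∀ y ∈ u, y < x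

lemma IsPrefixOf.isInitialSegment_or {u u' : Finset ℕ} {X : Set ℕ} (h : IsPrefixOf u X)
    (h' : IsPrefixOf u' X) : IsInitialSegment u' u ∨ IsInitialSegment u u' := by
  by_cases hsub : u' ⊆ u
  · exact Or.inl ⟨hsub, fun a ha b hb hbn => h'.2 b (h.1 hb) hbn a ha⟩
  · obtain ⟨c, hc, hcu⟩ := Finset.not_subset.1 hsub
    refine Or.inr ⟨fun b hb => by_contra fun hbu' => ?_,
      fun a ha b hb hbn => h.2 b (h'.1 hb) hbn a ha⟩
    exact (h'.2 b (h.1 hb) hbu' c hc).asymm (h.2 c (h'.1 hc) hcu b hb)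

end InitialSegment

section Rigidity

def IsWeakPlegma (m : ℕ) (s : ℕ → Finset ℕ) : Prop :=
  (∀ i j, i < j → j < m → ∀ k, 1 ≤ k → k ≤ min (s i).card (s j).card →
      nth (s i) k < nth (s j) k) ∧
  (∀ i < m, ∀ j < m, ∀ k, 1 ≤ k → k ≤ min (s i).card ((s j).card - 1) →
      nth (s i) k < nth (s j) (k + 1))

lemma IsPlegma.isWeakPlegma {m : ℕ} {s : ℕ → Finset ℕ} (h : IsPlegma m s) : IsWeakPlegma m s :=
  h.2

noncomputable def tupleUnion (m : ℕ) (s : ℕ → Finset ℕ) : Finset ℕ :=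
  (Finset.range m).biUnion s

noncomputable def liveIdx (m : ℕ) (s : ℕ → Finset ℕ) : Finset ℕ :=
  (Finset.range m).filter fun i => (s i).Nonempty

noncomputable def firstRound (m : ℕ) (s : ℕ → Finset ℕ) : Finset ℕ :=
  (liveIdx m s).image fun i => nth (s i) 1

variable {m : ℕ} {s t : ℕ → Finset ℕ}

lemma mem_tupleUnion {y : ℕ} : y ∈ tupleUnion m s ↔ ∃ j < m, y ∈ s j := by
  simp [tupleUnion]

lemma mem_liveIdx {i : ℕ} : i ∈ liveIdx m s ↔ i < m ∧ (s i).Nonempty := by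
  simp [liveIdx]

lemma eq_empty_of_notMem_liveIdx {i : ℕ} (hi : i < m) (h : i ∉ liveIdx m s) : s i = ∅ :=
  Finset.not_nonempty_iff_eq_empty.1 fun hne => h (mem_liveIdx.2 ⟨hi, hne⟩)

lemma IsWeakPlegma.comp_dropMin (h : IsWeakPlegma m s) : IsWeakPlegma m fun i => dropMin (s i) := by
  refine ⟨fun i j hij hj k hk hkc => ?_, fun i hi j hj k hk hkc => ?_⟩ <;>
    simp only [card_dropMin] at hkc
  · rw [nth_dropMin _ hk, nth_dropMin _ hk]
    exact h.1 i j hij hj (k + 1) (by omega) (by omega)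
  · rw [nth_dropMin _ hk, nth_dropMin _ (by omega : 1 ≤ k + 1)]
    exact h.2 i hi j hj (k + 1) (by omega) (by omega)

lemma IsWeakPlegma.strictMonoOn_nth_one (h : IsWeakPlegma m s) :
    StrictMonoOn (fun i => nth (s i) 1) (liveIdx m s : Set ℕ) := by
  intro i hi j hj hij
  obtain ⟨-, hsi⟩ := mem_liveIdx.1 hi
  obtain ⟨hjm, hsj⟩ := mem_liveIdx.1 hj
  have := Finset.card_pos.2 hsi
  have := Finset.card_pos.2 hsj
  exact h.1 i j hij hjm 1 le_rfl (by omega)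

lemma IsWeakPlegma.nth_one_lt (h : IsWeakPlegma m s) {i j y : ℕ} (hi : i ∈ liveIdx m s)
    (hj : j < m) (hy : y ∈ dropMin (s j)) : nth (s i) 1 < y := by
  obtain ⟨him, hsi⟩ := mem_liveIdx.1 hi
  have := Finset.card_pos.2 hsi
  have := two_le_card_of_mem_dropMin hy
  exact (h.2 i him j hj 1 le_rfl (by omega)).trans_le (nth_two_le hy)

lemma IsWeakPlegma.card_firstRound (h : IsWeakPlegma m s) :
    (firstRound m s).card = (liveIdx m s).card :=
  Finset.card_image_of_injOn h.strictMonoOn_nth_one.injOn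

lemma IsWeakPlegma.isInitialSegment_firstRound (h : IsWeakPlegma m s) :
    IsInitialSegment (firstRound m s) (tupleUnion m s) := by
  refine ⟨fun y hy => ?_, fun y hy z hz hzr => ?_⟩
  · obtain ⟨i, hi, rfl⟩ := Finset.mem_image.1 hy
    obtain ⟨him, hsi⟩ := mem_liveIdx.1 hi
    exact mem_tupleUnion.2 ⟨i, him, nth_one_mem hsi⟩
  · obtain ⟨i, hi, rfl⟩ := Finset.mem_image.1 hy
    obtain ⟨j, hj, hzj⟩ := mem_tupleUnion.1 hz
    refine h.nth_one_lt hi hj (mem_dropMin.2 ⟨fun hz1 => hzr ?_, hzj⟩)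
    exact Finset.mem_image.2 ⟨j, mem_liveIdx.2 ⟨hj, ⟨z, hzj⟩⟩, hz1.symm⟩

lemma IsWeakPlegma.tupleUnion_dropMin (h : IsWeakPlegma m s) :
    tupleUnion m (fun i => dropMin (s i)) = tupleUnion m s \ firstRound m s := by
  ext y
  simp only [mem_tupleUnion, Finset.mem_sdiff]
  constructor
  · rintro ⟨j, hj, hyj⟩
    refine ⟨⟨j, hj, (mem_dropMin.1 hyj).2⟩, fun hy => ?_⟩
    obtain ⟨i, hi, rfl⟩ := Finset.mem_image.1 hy
    exact (h.nth_one_lt hi hj hyj).false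
  · rintro ⟨⟨j, hj, hyj⟩, hyr⟩
    refine ⟨j, hj, mem_dropMin.2 ⟨fun hy1 => hyr ?_, hyj⟩⟩
    exact Finset.mem_image.2 ⟨j, mem_liveIdx.2 ⟨hj, ⟨y, hyj⟩⟩, hy1.symm⟩

lemma Finset.eqOn_of_strictMonoOn_of_image_eq {A : Finset ℕ} {f g : ℕ → ℕ}
    (hf : StrictMonoOn f A) (hg : StrictMonoOn g A) (h : A.image f = A.image g) :
    Set.EqOn f g A := by
  set e := A.orderEmbOfFin rfl
  have hfe : StrictMono (f ∘ e) := fun i j hij =>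
    hf (A.orderEmbOfFin_mem rfl i) (A.orderEmbOfFin_mem rfl j) (e.strictMono hij)
  have hge : StrictMono (g ∘ e) := fun i j hij =>
    hg (A.orderEmbOfFin_mem rfl i) (A.orderEmbOfFin_mem rfl j) (e.strictMono hij)
  have hrange : Set.range (f ∘ e) = Set.range (g ∘ e) := by
    rw [Set.range_comp, Set.range_comp, Finset.range_orderEmbOfFin, ← Finset.coe_image,
      ← Finset.coe_image, h]
  intro i hi
  obtain ⟨j, rfl⟩ : i ∈ Set.range e := by rwa [Finset.range_orderEmbOfFin]
  exact congrFun ((hfe.range_inj hge).1 hrange) j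

lemma IsWeakPlegma.firstRound_eq (hs : IsWeakPlegma m s) (ht : IsWeakPlegma m t)
    (hst : IsInitialSegment (tupleUnion m t) (tupleUnion m s))
    (hlive : liveIdx m s = liveIdx m t) : firstRound m s = firstRound m t :=
  hs.isInitialSegment_firstRound.eq_of_card_eq (ht.isInitialSegment_firstRound.trans hst)
    (by rw [hs.card_firstRound, ht.card_firstRound, hlive])

lemma IsWeakPlegma.nth_one_eq (hs : IsWeakPlegma m s) (ht : IsWeakPlegma m t)
    (hst : IsInitialSegment (tupleUnion m t) (tupleUnion m s))
    (hlive : liveIdx m s = liveIdx m t) {i : ℕ} (hi : i ∈ liveIdx m s) :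
    nth (s i) 1 = nth (t i) 1 := by
  refine Finset.eqOn_of_strictMonoOn_of_image_eq hs.strictMonoOn_nth_one
    (hlive ▸ ht.strictMonoOn_nth_one) ?_ hi
  simpa only [firstRound, hlive] using hs.firstRound_eq ht hst hlive

lemma IsWeakPlegma.isInitialSegment_tupleUnion_dropMin (hs : IsWeakPlegma m s)
    (ht : IsWeakPlegma m t) (hst : IsInitialSegment (tupleUnion m t) (tupleUnion m s))
    (hlive : liveIdx m s = liveIdx m t) :
    IsInitialSegment (tupleUnion m fun i => dropMin (t i))
      (tupleUnion m fun i => dropMin (s i)) := by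
  rw [hs.tupleUnion_dropMin, ht.tupleUnion_dropMin, hs.firstRound_eq ht hst hlive]
  exact hst.sdiff _

lemma exists_ne_subset_of_liveIdx_ne (h : liveIdx m s ≠ liveIdx m t) :
    ∃ i < m, s i ≠ t i ∧ (s i ⊆ t i ∨ t i ⊆ s i) := by
  obtain ⟨i, hi, hne⟩ : ∃ i < m, ¬((s i).Nonempty ↔ (t i).Nonempty) := by
    by_contra! hcon
    exact h (Finset.filter_congr fun i hi => hcon i (Finset.mem_range.1 hi))
  refine ⟨i, hi, fun heq => hne (heq ▸ Iff.rfl), ?_⟩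
  rcases (s i).eq_empty_or_nonempty with hs | hs
  · exact Or.inl (hs ▸ Finset.empty_subset _)
  · rw [Finset.not_nonempty_iff_eq_empty.1 fun ht => hne ⟨fun _ => ht, fun _ => hs⟩]
    exact Or.inr (Finset.empty_subset _)

/-- Induction on the size of the union of `t`: the first rounds of `s` and `t` are initial segments
of the union of `s` of the same size, hence equal, and can be peeled off. -/
theorem IsWeakPlegma.eq_or_exists_ne_subset (hs : IsWeakPlegma m s) (ht : IsWeakPlegma m t)
    (hst : IsInitialSegment (tupleUnion m t) (tupleUnion m s)) :
    (∀ i < m, s i = t i) ∨ ∃ i < m, s i ≠ t i ∧ (s i ⊆ t i ∨ t i ⊆ s i) := by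
  induction hN : (tupleUnion m t).card using Nat.strong_induction_on generalizing s t with
  | _ N ih =>
  by_cases hlive : liveIdx m s = liveIdx m t
  swap
  · exact Or.inr (exists_ne_subset_of_liveIdx_ne hlive)
  have hdead : ∀ i < m, i ∉ liveIdx m s → s i = ∅ ∧ t i = ∅ := fun i hi hil =>
    ⟨eq_empty_of_notMem_liveIdx hi hil, eq_empty_of_notMem_liveIdx hi (hlive ▸ hil)⟩
  rcases (liveIdx m s).eq_empty_or_nonempty with hempty | hne
  · left
    intro i hi
    obtain ⟨hsi, hti⟩ := hdead i hi (by simp [hempty])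
    rw [hsi, hti]
  have hrebuild : ∀ i ∈ liveIdx m s, s i = insert (nth (s i) 1) (dropMin (s i)) ∧
      t i = insert (nth (s i) 1) (dropMin (t i)) := fun i hi =>
    ⟨(insert_nth_one_dropMin (mem_liveIdx.1 hi).2).symm,
      by rw [hs.nth_one_eq ht hst hlive hi, insert_nth_one_dropMin (mem_liveIdx.1 (hlive ▸ hi)).2]⟩
  have hlt : (tupleUnion m fun i => dropMin (t i)).card < N := by
    have hR := ht.isInitialSegment_firstRound.1
    rw [ht.tupleUnion_dropMin, Finset.card_sdiff_of_subset hR, ← hN]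
    have := Finset.card_le_card hR
    have := ht.card_firstRound ▸ hlive ▸ Finset.card_pos.2 hne
    omega
  rcases ih _ hlt hs.comp_dropMin ht.comp_dropMin
    (hs.isInitialSegment_tupleUnion_dropMin ht hst hlive) rfl with heq | ⟨j, hj, hne, hsub⟩
  · left
    intro i hi
    by_cases hil : i ∈ liveIdx m s
    · rw [(hrebuild i hil).1, (hrebuild i hil).2, heq i hi]
    · rw [(hdead i hi hil).1, (hdead i hi hil).2]
  · have hjl : j ∈ liveIdx m s := by
      by_contra hjl
      exact hne (by simp [(hdead j hj hjl).1, (hdead j hj hjl).2])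
    right
    refine ⟨j, hj, fun h => hne (by simp only [dropMin, h]), ?_⟩
    rw [(hrebuild j hjl).1, (hrebuild j hjl).2]
    exact hsub.imp (Finset.insert_subset_insert _) (Finset.insert_subset_insert _)

theorem eq_of_isInitialSegment_tupleUnion {F : Set (Finset ℕ)} (hF : IsAntichain (· ⊆ ·) F)
    (hsF : ∀ i < m, s i ∈ F) (htF : ∀ i < m, t i ∈ F) (hs : IsPlegma m s) (ht : IsPlegma m t)
    (hst : IsInitialSegment (tupleUnion m t) (tupleUnion m s)) : ∀ i < m, s i = t i := by
  refine (hs.isWeakPlegma.eq_or_exists_ne_subset ht.isWeakPlegma hst).resolve_right ?_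
  rintro ⟨i, hi, hne, hsub | hsub⟩
  · exact hF (hsF i hi) (htF i hi) hne hsub
  · exact hF (htF i hi) (hsF i hi) hne.symm hsub

end Rigidity

section Fusion

lemma Set.Infinite.inter_Ioi {A : Set ℕ} (hA : A.Infinite) (a : ℕ) : (A ∩ Set.Ioi a).Infinite :=
  (hA.sdiff (Set.finite_Iic a)).mono fun _ hx => ⟨hx.1, Set.notMem_Iic.1 hx.2⟩

lemma exists_seq_of_forall_exists {α : Type*} (P : ℕ → α → Prop) (r : α → α → Prop) {a₀ : α}
    (h₀ : P 0 a₀) (hstep : ∀ n a, P n a → ∃ b, P (n + 1) b ∧ r a b) :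
    ∃ g : ℕ → α, g 0 = a₀ ∧ (∀ n, P n (g n)) ∧ ∀ n, r (g n) (g (n + 1)) := by
  choose f hfP hfr using hstep
  let g : (n : ℕ) → {a // P n a} := fun n =>
    Nat.rec ⟨a₀, h₀⟩ (fun n a => ⟨f n a.1 a.2, hfP n a.1 a.2⟩) n
  exact ⟨fun n => (g n).1, rfl, fun n => (g n).2, fun n => hfr n (g n).1 (g n).2⟩

theorem exists_strictMono_fusion {A : Set ℕ} (hA : A.Infinite)
    (Q : ℕ → Finset ℕ → Set ℕ → Prop) (hQ : ∀ n u S S', S' ⊆ S → Q n u S → Q n u S')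
    (hex : ∀ n u S, S ⊆ A → S.Infinite → ∃ S' ⊆ S, S'.Infinite ∧ Q n u S') :
    ∃ ℓ : ℕ → ℕ, StrictMono ℓ ∧ Set.range ℓ ⊆ A ∧
      ∀ n, Q n ((Finset.range n).image ℓ) (ℓ '' Set.Ici n) := by
  classical
  obtain ⟨S₀, hS₀A, hS₀, hQ₀⟩ := hex 0 ∅ A subset_rfl hA
  let P : ℕ → Finset ℕ × Set ℕ → Prop := fun n p => p.2 ⊆ A ∧ p.2.Infinite ∧ Q n p.1 p.2
  let r : Finset ℕ × Set ℕ → Finset ℕ × Set ℕ → Prop := fun p q =>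
    q.1 = insert (sInf p.2) p.1 ∧ q.2 ⊆ p.2 ∩ Set.Ioi (sInf p.2)
  obtain ⟨g, hg₀, hgP, hgr⟩ := exists_seq_of_forall_exists P r (a₀ := (∅, S₀)) ⟨hS₀A, hS₀, hQ₀⟩
    fun n p hp => by
      have hsub : p.2 ∩ Set.Ioi (sInf p.2) ⊆ A := Set.inter_subset_left.trans hp.1
      obtain ⟨S', hS'sub, hS', hQ'⟩ :=
        hex (n + 1) (insert (sInf p.2) p.1) _ hsub (hp.2.1.inter_Ioi _)
      exact ⟨(insert (sInf p.2) p.1, S'), ⟨hS'sub.trans hsub, hS', hQ'⟩, rfl, hS'sub⟩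
  set ℓ : ℕ → ℕ := fun n => sInf (g n).2
  have hmem : ∀ n, ℓ n ∈ (g n).2 := fun n => Nat.sInf_mem (hgP n).2.1.nonempty
  have hanti : Antitone fun n => (g n).2 :=
    antitone_nat_of_succ_le fun n => (hgr n).2.trans Set.inter_subset_left
  have hℓ : StrictMono ℓ := strictMono_nat_of_lt_succ fun n => ((hgr n).2 (hmem (n + 1))).2
  have hfst : ∀ n, (g n).1 = (Finset.range n).image ℓ := by
    intro n
    induction n with
    | zero => simp [hg₀]
    | succ n ih => rw [(hgr n).1, ih, Finset.range_add_one, Finset.image_insert]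
  refine ⟨ℓ, hℓ, Set.range_subset_iff.2 fun n => (hgP n).1 (hmem n), fun n => ?_⟩
  rw [← hfst]
  refine hQ _ _ _ _ ?_ (hgP n).2.2
  rintro _ ⟨i, hi, rfl⟩
  exact hanti hi (hmem i)

lemma exists_infinite_subset_forall_finset {ι : Type*} (P : ι → Set ℕ → Prop)
    (hP : ∀ i S S', S' ⊆ S → P i S → P i S')
    (hex : ∀ i S, S.Infinite → ∃ S' ⊆ S, S'.Infinite ∧ P i S') (T : Finset ι) {A : Set ℕ}
    (hA : A.Infinite) : ∃ A' ⊆ A, A'.Infinite ∧ ∀ i ∈ T, P i A' := by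
  classical
  induction T using Finset.induction_on with
  | empty => exact ⟨A, subset_rfl, hA, by simp⟩
  | insert i T _ ih =>
    obtain ⟨A₁, h₁, hA₁, hT⟩ := ih
    obtain ⟨A₂, h₂, hA₂, hi⟩ := hex i A₁ hA₁
    exact ⟨A₂, h₂.trans h₁, hA₂, Finset.forall_mem_insert _ _ _ |>.2
      ⟨hi, fun j hj => hP j _ _ h₂ (hT j hj)⟩⟩

def aboveSet (s : Finset ℕ) : Set ℕ := {x | ∀ y ∈ s, y < x}

lemma Set.Infinite.inter_aboveSet {A : Set ℕ} (hA : A.Infinite) (s : Finset ℕ) :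
    (A ∩ aboveSet s).Infinite :=
  (hA.inter_Ioi (s.sup id)).mono fun _ hx =>
    ⟨hx.1, fun _ hy => (Finset.le_sup (f := id) hy).trans_lt hx.2⟩

lemma StrictMono.exists_subset_image_range {ℓ : ℕ → ℕ} (hℓ : StrictMono ℓ) {s : Finset ℕ}
    (hs : ↑s ⊆ Set.range ℓ) :
    ∃ n, s ⊆ (Finset.range n).image ℓ ∧ Set.range ℓ ∩ aboveSet s ⊆ ℓ '' Set.Ici n := by
  choose! idx hidx using fun y (hy : y ∈ s) => hs hy
  refine ⟨s.sup fun y => idx y + 1, fun y hy => Finset.mem_image.2 ⟨idx y, ?_, hidx y hy⟩, ?_⟩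
  · exact Finset.mem_range.2 ((Finset.le_sup (f := fun y => idx y + 1) hy))
  · rintro _ ⟨⟨i, rfl⟩, habove⟩
    refine ⟨i, Set.mem_Ici.2 (Finset.sup_le fun y hy => ?_), rfl⟩
    exact hℓ.lt_iff_lt.1 ((hidx y hy).symm ▸ habove y hy)

theorem exists_infinite_subset_forall_finset_subset {L : Set ℕ} (hL : L.Infinite)
    (P : Finset ℕ → Prop) (h₀ : P ∅)
    (hfin : ∀ s : Finset ℕ, ↑s ⊆ L → P s → {a ∈ L ∩ aboveSet s | ¬P (insert a s)}.Finite) :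
    ∃ L' ⊆ L, L'.Infinite ∧ ∀ s : Finset ℕ, ↑s ⊆ L' → P s := by
  classical
  let Q : ℕ → Finset ℕ → Set ℕ → Prop := fun _ u S => ↑u ⊆ L → (∀ s ⊆ u, P s) →
    ∀ a ∈ S, ∀ s ⊆ u, a ∈ aboveSet s → P (insert a s)
  obtain ⟨ℓ, hℓ, hℓL, hQ⟩ := exists_strictMono_fusion hL Q
    (fun _ _ _ _ hS' hQ huL hu a ha => hQ huL hu a (hS' ha)) fun n u S hSL hS => by
      by_cases hu : ↑u ⊆ L ∧ ∀ s ⊆ u, P s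
      · have hbad : (⋃ s ∈ u.powerset, {a ∈ L ∩ aboveSet s | ¬P (insert a s)}).Finite :=
          u.powerset.finite_toSet.biUnion fun s hs =>
            hfin s ((Finset.coe_subset.2 (Finset.mem_powerset.1 hs)).trans hu.1)
              (hu.2 s (Finset.mem_powerset.1 hs))
        refine ⟨_, Set.sdiff_subset, hS.sdiff hbad,
          fun _ _ a ha s hsu has => by_contra fun hP => ?_⟩
        exact ha.2 (Set.mem_biUnion (Finset.mem_powerset.2 hsu) ⟨⟨hSL ha.1, has⟩, hP⟩)
      · exact ⟨S, subset_rfl, hS, fun huL hP => absurd ⟨huL, hP⟩ hu⟩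
  have hinit : ∀ n, ∀ s ⊆ (Finset.range n).image ℓ, P s := by
    intro n
    induction n with
    | zero => simp [h₀]
    | succ n ih =>
      intro s hs
      rw [Finset.range_add_one, Finset.image_insert] at hs
      by_cases hns : ℓ n ∈ s
      · rw [← Finset.insert_erase hns]
        refine hQ n (fun _ hy => ?_) ih (ℓ n) ⟨n, Set.mem_Ici.2 le_rfl, rfl⟩ _ ?_ fun y hy => ?_
        · obtain ⟨i, -, rfl⟩ := Finset.mem_image.1 hy
          exact hℓL ⟨i, rfl⟩
        · simpa [Finset.subset_insert_iff] using hs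
        · obtain ⟨i, hi, rfl⟩ := Finset.mem_image.1 (Finset.subset_insert_iff.1 hs hy)
          exact hℓ (Finset.mem_range.1 hi)
      · exact ih s ((Finset.subset_insert_iff_of_notMem hns).1 hs)
  refine ⟨Set.range ℓ, hℓL, Set.infinite_range_of_injective hℓ.injective, fun s hs => ?_⟩
  obtain ⟨n, hsn, -⟩ := hℓ.exists_subset_image_range hs
  exact hinit n s hsn

end Fusion

section Galvin

lemma IsPrefixOf.insert_sInf {u : Finset ℕ} {X : Set ℕ} (hX : X.Nonempty)
    (hu : IsPrefixOf u (X \ {sInf X})) : IsPrefixOf (insert (sInf X) u) X := by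
  refine ⟨?_, fun x hx hxu y hy => ?_⟩
  · rw [Finset.coe_insert]
    exact Set.insert_subset (Nat.sInf_mem hX) (hu.1.trans Set.sdiff_subset)
  have hxa : x ≠ sInf X := fun h => hxu (h ▸ Finset.mem_insert_self _ _)
  rcases Finset.mem_insert.1 hy with rfl | hyu
  · exact (Nat.sInf_le hx).lt_of_ne' hxa
  · exact hu.2 x ⟨hx, hxa⟩ (fun h => hxu (Finset.mem_insert_of_mem h)) y hyu

variable (B : Set (Finset ℕ))

/-- Combinatorial forcing in the sense of Galvin–Prikry. -/
def Accepts (A : Set ℕ) (s : Finset ℕ) : Prop :=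
  ∀ X ⊆ A, X.Infinite → X ⊆ aboveSet s → ∃ u, IsPrefixOf u X ∧ s ∪ u ∈ B

def Rejects (A : Set ℕ) (s : Finset ℕ) : Prop :=
  ∀ A' ⊆ A, A'.Infinite → ¬Accepts B A' s

variable {B} {A A' : Set ℕ} {s : Finset ℕ}

lemma Accepts.mono (h : A' ⊆ A) (hA : Accepts B A s) : Accepts B A' s :=
  fun X hX => hA X (hX.trans h)

lemma Rejects.mono (h : A' ⊆ A) (hA : Rejects B A s) : Rejects B A' s :=
  fun A'' h' => hA A'' (h'.trans h)

lemma accepts_of_mem (h : s ∈ B) : Accepts B A s :=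
  fun _ _ _ _ => ⟨∅, ⟨by simp, by simp⟩, by simpa⟩

lemma Accepts.of_inter_aboveSet (h : Accepts B (A ∩ aboveSet s) s) : Accepts B A s :=
  fun X hXA hX hXs => h X (Set.subset_inter hXA hXs) hX hXs

lemma Rejects.of_inter_aboveSet (h : Rejects B (A ∩ aboveSet s) s) : Rejects B A s :=
  fun _ hA'' hinf hacc => h _ (Set.inter_subset_inter_left _ hA'') (hinf.inter_aboveSet s)
    (hacc.mono Set.inter_subset_left)

lemma exists_accepts_or_rejects (hA : A.Infinite) (s : Finset ℕ) :
    ∃ A' ⊆ A, A'.Infinite ∧ (Accepts B A' s ∨ Rejects B A' s) := by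
  by_cases hacc : ∃ A' ⊆ A, A'.Infinite ∧ Accepts B A' s
  · obtain ⟨A', hA'A, hA', hacc⟩ := hacc
    exact ⟨A', hA'A, hA', Or.inl hacc⟩
  · exact ⟨A, subset_rfl, hA, Or.inr fun A' hA'A hA' h => hacc ⟨A', hA'A, hA', h⟩⟩

lemma exists_forall_subset_accepts_or_rejects (hA : A.Infinite) (u : Finset ℕ) :
    ∃ A' ⊆ A, A'.Infinite ∧ ∀ s ⊆ u, Accepts B A' s ∨ Rejects B A' s := by
  obtain ⟨A', hA'A, hA', h⟩ := exists_infinite_subset_forall_finset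
    (fun s S => Accepts B S s ∨ Rejects B S s)
    (fun _ _ _ h => Or.imp (Accepts.mono h) (Rejects.mono h))
    (fun s _ hS => exists_accepts_or_rejects hS s) u.powerset hA
  exact ⟨A', hA'A, hA', fun s hs => h s (Finset.mem_powerset.2 hs)⟩

theorem exists_forall_accepts_or_rejects (hA : A.Infinite) :
    ∃ L ⊆ A, L.Infinite ∧ ∀ s : Finset ℕ, ↑s ⊆ L → Accepts B L s ∨ Rejects B L s := by
  obtain ⟨ℓ, hℓ, hℓA, hdec⟩ := exists_strictMono_fusion hA
    (fun _ u S => ∀ s ⊆ u, Accepts B S s ∨ Rejects B S s)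
    (fun _ _ _ _ h hQ s hs => (hQ s hs).imp (Accepts.mono h) (Rejects.mono h))
    fun _ u _ _ hS => exists_forall_subset_accepts_or_rejects hS u
  refine ⟨Set.range ℓ, hℓA, Set.infinite_range_of_injective hℓ.injective, fun s hs => ?_⟩
  obtain ⟨n, hsn, habove⟩ := hℓ.exists_subset_image_range hs
  exact (hdec n s hsn).imp (fun h => (h.mono habove).of_inter_aboveSet)
    fun h => (h.mono habove).of_inter_aboveSet

/-- Otherwise the set of these `a` would itself accept `s`. -/
lemma Rejects.finite_setOf_accepts_insert {L : Set ℕ} (hrej : Rejects B L s) :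
    {a ∈ L ∩ aboveSet s | Accepts B L (insert a s)}.Finite := by
  by_contra hW
  refine hrej _ (fun a ha => ha.1.1) hW fun X hXW hX _ => ?_
  have hXa := Nat.sInf_mem hX.nonempty
  obtain ⟨⟨-, has⟩, hacc⟩ := hXW hXa
  obtain ⟨u, hu, hB⟩ := hacc (X \ {sInf X}) (fun x hx => (hXW hx.1).1.1)
    (hX.sdiff (Set.finite_singleton _)) fun x hx y hy => by
      rcases Finset.mem_insert.1 hy with rfl | hys
      · exact (Nat.sInf_le hx.1).lt_of_ne' hx.2
      · exact (hXW hx.1).1.2 y hys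
  refine ⟨_, hu.insert_sInf hX.nonempty, ?_⟩
  rwa [Finset.union_insert, ← Finset.insert_union]

/-- Galvin's lemma. -/
theorem exists_infinite_subset_galvin (B : Set (Finset ℕ)) (hA : A.Infinite) :
    ∃ L ⊆ A, L.Infinite ∧
      ((∀ u : Finset ℕ, ↑u ⊆ L → u ∉ B) ∨ ∀ X ⊆ L, X.Infinite → ∃ u ∈ B, IsPrefixOf u X) := by
  obtain ⟨L₀, hL₀A, hL₀, hdec⟩ := exists_forall_accepts_or_rejects (B := B) hA
  rcases hdec ∅ (by simp) with hacc | hrej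
  · refine ⟨L₀, hL₀A, hL₀, Or.inr fun X hX hXinf => ?_⟩
    obtain ⟨u, hu, hB⟩ := hacc X hX hXinf fun _ _ _ h => absurd h (Finset.notMem_empty _)
    exact ⟨u, by simpa using hB, hu⟩
  obtain ⟨L, hLL₀, hL, hrejL⟩ := exists_infinite_subset_forall_finset_subset hL₀ (Rejects B L₀)
    hrej fun s hs hrs => hrs.finite_setOf_accepts_insert.subset fun a ha =>
      ⟨ha.1, (hdec _ (by simpa using Set.insert_subset ha.1.1 hs)).resolve_right ha.2⟩
  exact ⟨L, hLL₀.trans hL₀A, hL, Or.inl fun u hu huB =>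
    hrejL u hu L₀ subset_rfl hL₀ (accepts_of_mem huB)⟩

end Galvin

section PlegmaRamsey

def IsPlegmaIn (F : Set (Finset ℕ)) (L : Set ℕ) (m : ℕ) (s : ℕ → Finset ℕ) : Prop :=
  (∀ j < m, s j ∈ F ∧ ↑(s j) ⊆ L) ∧ IsPlegma m s

variable {F : Set (Finset ℕ)} {A L L' : Set ℕ} {m m' : ℕ} {s : ℕ → Finset ℕ}

lemma IsPlegma.of_le (h : m' ≤ m) (hs : IsPlegma m s) : IsPlegma m' s :=
  ⟨fun i hi => hs.1 i (hi.trans_le h), fun i j hij hj => hs.2.1 i j hij (hj.trans_le h),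
    fun i hi j hj => hs.2.2 i (hi.trans_le h) j (hj.trans_le h)⟩

lemma IsPlegmaIn.of_le (h : m' ≤ m) (hs : IsPlegmaIn F L m s) : IsPlegmaIn F L m' s :=
  ⟨fun j hj => hs.1 j (hj.trans_le h), hs.2.of_le h⟩

lemma IsPlegmaIn.mono (h : L ⊆ L') (hs : IsPlegmaIn F L m s) : IsPlegmaIn F L' m s :=
  ⟨fun j hj => ⟨(hs.1 j hj).1, (hs.1 j hj).2.trans h⟩, hs.2⟩

lemma IsPlegmaIn.tupleUnion_subset (hs : IsPlegmaIn F L m s) : ↑(tupleUnion m s) ⊆ L := by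
  intro y hy
  obtain ⟨j, hj, hyj⟩ := mem_tupleUnion.1 hy
  exact (hs.1 j hj).2 hyj

/-- Apply Galvin's lemma to the unions of tuples of one colour. In its second alternative, the
union of a tuple `s` in `L` and the union of some tuple of that colour are both initial segments
of one set, so by rigidity the two tuples agree. -/
theorem exists_plegma_homogeneous (hF : IsAntichain (· ⊆ ·) F) (c : (ℕ → Finset ℕ) → Prop)
    (hc : ∀ s s', (∀ i < m, s i = s' i) → (c s ↔ c s')) (hA : A.Infinite) :
    ∃ L ⊆ A, L.Infinite ∧ ((∀ s, IsPlegmaIn F L m s → c s) ∨ ∀ s, IsPlegmaIn F L m s → ¬c s) := by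
  obtain ⟨L, hLA, hL, hB | hB⟩ := exists_infinite_subset_galvin
    {u | ∃ s, (∀ j < m, s j ∈ F) ∧ IsPlegma m s ∧ tupleUnion m s = u ∧ c s} hA
  · exact ⟨L, hLA, hL, Or.inr fun s hs hcs => hB _ hs.tupleUnion_subset
      ⟨s, fun j hj => (hs.1 j hj).1, hs.2, rfl, hcs⟩⟩
  refine ⟨L, hLA, hL, Or.inl fun s hs => ?_⟩
  set u := tupleUnion m s
  have hX : ↑u ∪ L ∩ aboveSet u ⊆ L := Set.union_subset hs.tupleUnion_subset Set.inter_subset_left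
  have hu : IsPrefixOf u (↑u ∪ L ∩ aboveSet u) := ⟨Set.subset_union_left,
    fun x hx hxu y hy => (hx.resolve_left hxu).2 y hy⟩
  obtain ⟨_, ⟨s', hs'F, hs', rfl, hcs'⟩, hu'⟩ :=
    hB _ hX ((hL.inter_aboveSet u).mono Set.subset_union_right)
  have hsF : ∀ j < m, s j ∈ F := fun j hj => (hs.1 j hj).1
  refine (hc s' s fun i hi => ?_).1 hcs'
  rcases hu.isInitialSegment_or hu' with h | h
  · exact (eq_of_isInitialSegment_tupleUnion hF hsF hs'F hs.2 hs' h i hi).symm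
  · exact eq_of_isInitialSegment_tupleUnion hF hs'F hsF hs' hs.2 h i hi

theorem exists_plegma_monochromatic {κ : Type*} [Finite κ] (hF : IsAntichain (· ⊆ ·) F)
    (c : (ℕ → Finset ℕ) → κ) (hc : ∀ s s', (∀ i < m, s i = s' i) → c s = c s')
    (hA : A.Infinite) : ∃ L ⊆ A, L.Infinite ∧ ∃ p, ∀ s, IsPlegmaIn F L m s → c s = p := by
  classical
  have := Fintype.ofFinite κ
  suffices ∀ K : Finset κ, ∀ A : Set ℕ, A.Infinite → (∀ s, IsPlegmaIn F A m s → c s ∈ K) →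
      ∃ L ⊆ A, L.Infinite ∧ ∃ p, ∀ s, IsPlegmaIn F L m s → c s = p from
    this Finset.univ A hA fun _ _ => Finset.mem_univ _
  intro K
  induction K using Finset.induction_on with
  | empty =>
    exact fun A hA hK => ⟨A, subset_rfl, hA, c fun _ => ∅, fun s hs => by simpa using hK s hs⟩
  | insert p K _ ih =>
    intro A hA hK
    obtain ⟨L, hLA, hL, hp | hp⟩ := exists_plegma_homogeneous hF (fun s => c s = p)
      (fun s s' h => by rw [hc s s' h]) hA
    · exact ⟨L, hLA, hL, p, hp⟩
    · obtain ⟨L', hL'L, hL', q, hq⟩ := ih L hL fun s hs =>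
        (Finset.mem_insert.1 (hK s (hs.mono hLA))).resolve_left (hp s hs)
      exact ⟨L', hL'L.trans hLA, hL', q, hq⟩

theorem exists_plegma_oscillation_lt {ι : Type*} [Finite ι] (hF : IsAntichain (· ⊆ ·) F)
    (φ : ι → (ℕ → Finset ℕ) → ℝ) (hφ : ∀ i s s', (∀ j < m, s j = s' j) → φ i s = φ i s')
    {D : ℝ} (hφD : ∀ i s, φ i s ∈ Set.Icc 0 D) {ε : ℝ} (hε : 0 < ε) (hA : A.Infinite) :
    ∃ L ⊆ A, L.Infinite ∧
      ∀ i s s', IsPlegmaIn F L m s → IsPlegmaIn F L m s' → |φ i s - φ i s'| < ε := by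
  let c : (ℕ → Finset ℕ) → ι → Fin (⌊D / ε⌋₊ + 1) := fun s i =>
    ⟨⌊φ i s / ε⌋₊, Nat.lt_succ_of_le (Nat.floor_le_floor (by gcongr; exact (hφD i s).2))⟩
  obtain ⟨L, hLA, hL, p, hp⟩ := exists_plegma_monochromatic hF c
    (fun s s' h => funext fun i => by simp only [c, hφ i s s' h]) hA
  refine ⟨L, hLA, hL, fun i s s' hs hs' => ?_⟩
  have hfloor : ⌊φ i s / ε⌋ = ⌊φ i s' / ε⌋ := by
    have := congrArg (fun c => ((c i : ℕ) : ℤ)) ((hp s hs).trans (hp s' hs').symm)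
    simp only [c] at this
    rwa [Int.natCast_floor_eq_floor (div_nonneg (hφD i s).1 hε.le),
      Int.natCast_floor_eq_floor (div_nonneg (hφD i s').1 hε.le)] at this
  have := Int.abs_sub_lt_one_of_floor_eq_floor hfloor
  rwa [← sub_div, abs_div, abs_of_pos hε, div_lt_one hε] at this

end PlegmaRamsey

section Stability

noncomputable def tupleNorm (y : ℕ → Finset ℕ → X) (m : ℕ) (a : ℕ → ℝ) (s : ℕ → Finset ℕ) : ℝ :=
  ‖∑ j ∈ Finset.range m, a j • y j (s j)‖

variable {F : Set (Finset ℕ)} {y : ℕ → Finset ℕ → X} {C ε : ℝ} {m : ℕ} {A L : Set ℕ}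

lemma tupleNorm_congr {a : ℕ → ℝ} {s s' : ℕ → Finset ℕ} (h : ∀ j < m, s j = s' j) :
    tupleNorm y m a s = tupleNorm y m a s' := by
  unfold tupleNorm
  congr 1
  exact Finset.sum_congr rfl fun j hj => by rw [h j (Finset.mem_range.1 hj)]

lemma abs_tupleNorm_sub_le (hy : ∀ j t, ‖y j t‖ ≤ C) (a b : ℕ → ℝ) (s : ℕ → Finset ℕ) :
    |tupleNorm y m a s - tupleNorm y m b s| ≤ C * ∑ j ∈ Finset.range m, |a j - b j| := by
  refine (abs_norm_sub_norm_le _ _).trans ?_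
  rw [← Finset.sum_sub_distrib, Finset.mul_sum]
  refine (norm_sum_le _ _).trans (Finset.sum_le_sum fun j _ => ?_)
  rw [← sub_smul, norm_smul, Real.norm_eq_abs, mul_comm]
  exact mul_le_mul_of_nonneg_right (hy j (s j)) (abs_nonneg _)

lemma abs_tupleNorm_sub_le_of_forall_le (hy : ∀ j t, ‖y j t‖ ≤ C) {a b : ℕ → ℝ} {η : ℝ}
    (hab : ∀ j < m, |a j - b j| ≤ η) (s : ℕ → Finset ℕ) :
    |tupleNorm y m a s - tupleNorm y m b s| ≤ C * (m * η) := by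
  have hC : 0 ≤ C := (norm_nonneg _).trans (hy 0 ∅)
  refine (abs_tupleNorm_sub_le hy a b s).trans (mul_le_mul_of_nonneg_left ?_ hC)
  simpa using Finset.sum_le_card_nsmul _ _ η fun j hj => hab j (Finset.mem_range.1 hj)

lemma tupleNorm_le (hy : ∀ j t, ‖y j t‖ ≤ C) {a : ℕ → ℝ} (ha : ∀ j, |a j| ≤ 1)
    (s : ℕ → Finset ℕ) : tupleNorm y m a s ≤ C * m := by
  have h := abs_tupleNorm_sub_le_of_forall_le (m := m) hy (b := 0)
    (fun j _ => by simpa using ha j) s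
  simpa [tupleNorm] using (le_abs_self _).trans h

lemma exists_finset_approx (m : ℕ) {η : ℝ} (hη : 0 < η) :
    ∃ N : Finset (ℕ → ℝ), (∀ b ∈ N, ∀ j, |b j| ≤ 1) ∧
      ∀ a : ℕ → ℝ, (∀ j, |a j| ≤ 1) → ∃ b ∈ N, ∀ j < m, |a j - b j| < η := by
  classical
  obtain ⟨t, htK, ht, hcover⟩ :=
    finite_cover_balls_of_compact (isCompact_Icc (a := (-1 : Fin m → ℝ)) (b := 1)) hη
  let ext : (Fin m → ℝ) → ℕ → ℝ := fun b j => if h : j < m then b ⟨j, h⟩ else 0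
  refine ⟨ht.toFinset.image ext, fun b hb j => ?_, fun a ha => ?_⟩
  · obtain ⟨b, hbt, rfl⟩ := Finset.mem_image.1 hb
    by_cases hj : j < m
    · have := htK (ht.mem_toFinset.1 hbt)
      simpa [ext, hj, abs_le] using And.intro (this.1 ⟨j, hj⟩) (this.2 ⟨j, hj⟩)
    · simp [ext, hj]
  · obtain ⟨b, hbt, hab⟩ := Set.mem_iUnion₂.1 (hcover (a := fun i : Fin m => a i)
      ⟨fun i => (abs_le.1 (ha i)).1, fun i => (abs_le.1 (ha i)).2⟩)
    refine ⟨ext b, Finset.mem_image.2 ⟨b, ht.mem_toFinset.2 hbt, rfl⟩, fun j hj => ?_⟩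
    simpa [ext, hj, Real.dist_eq] using (dist_pi_lt_iff hη).1 (Metric.mem_ball.1 hab) ⟨j, hj⟩

def IsStableOn (F : Set (Finset ℕ)) (y : ℕ → Finset ℕ → X) (m : ℕ) (ε : ℝ) (L : Set ℕ) : Prop :=
  ∀ a : ℕ → ℝ, (∀ j, |a j| ≤ 1) → ∀ s s', IsPlegmaIn F L m s → IsPlegmaIn F L m s' →
    |tupleNorm y m a s - tupleNorm y m a s'| ≤ ε

lemma IsStableOn.mono {L' : Set ℕ} (h : L' ⊆ L) (hL : IsStableOn F y m ε L) :
    IsStableOn F y m ε L' :=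
  fun a ha s s' hs hs' => hL a ha s s' (hs.mono h) (hs'.mono h)

theorem exists_isStableOn (hF : IsAntichain (· ⊆ ·) F) (hy : ∀ j t, ‖y j t‖ ≤ C) (m : ℕ)
    (hε : 0 < ε) (hA : A.Infinite) : ∃ L ⊆ A, L.Infinite ∧ IsStableOn F y m ε L := by
  have hC : 0 ≤ C := (norm_nonneg _).trans (hy 0 ∅)
  set η := ε / (3 * (C * m + 1))
  have hη : 0 < η := by positivity
  have hCη : C * (m * η) ≤ ε / 3 := by
    rw [show C * (m * η) = ε / 3 * (C * m / (C * m + 1)) by simp only [η]; field_simp]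
    exact mul_le_of_le_one_right (by positivity) ((div_le_one (by positivity)).2 (by linarith))
  obtain ⟨N, hNbdd, hN⟩ := exists_finset_approx m hη
  obtain ⟨L, hLA, hL, hosc⟩ := exists_plegma_oscillation_lt hF
    (fun (b : N) s => tupleNorm y m b s) (fun b s s' h => tupleNorm_congr h)
    (fun b s => ⟨norm_nonneg _, tupleNorm_le hy (hNbdd b b.2) s⟩) (div_pos hε three_pos) hA
  refine ⟨L, hLA, hL, fun a ha s s' hs hs' => ?_⟩
  obtain ⟨b, hb, hab⟩ := hN a ha
  have hclose := abs_tupleNorm_sub_le_of_forall_le hy (fun j hj => (hab j hj).le)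
  have := hosc ⟨b, hb⟩ s s' hs hs'
  have h₁ := hclose s
  have h₂ := hclose s'
  rw [abs_le] at h₁ h₂ ⊢
  rw [abs_lt] at this
  constructor <;> linarith

theorem exists_strictMono_isStableOn (hF : IsAntichain (· ⊆ ·) F) (hy : ∀ j t, ‖y j t‖ ≤ C)
    (hA : A.Infinite) : ∃ ℓ : ℕ → ℕ, StrictMono ℓ ∧ Set.range ℓ ⊆ A ∧
      ∀ n, ∀ m ≤ n, IsStableOn F y m (1 / (n + 1)) (ℓ '' Set.Ici n) :=
  exists_strictMono_fusion hA (fun n _ S => ∀ m ≤ n, IsStableOn F y m (1 / (n + 1)) S)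
    (fun _ _ _ _ h hS m hm => (hS m hm).mono h) fun n _ S _ hS => by
      obtain ⟨L, hLS, hL, hstable⟩ := exists_infinite_subset_forall_finset
        (fun m L => IsStableOn F y m (1 / (n + 1)) L) (fun _ _ _ h hL => hL.mono h)
        (fun m _ hS => exists_isStableOn hF hy m (by positivity) hS) (Finset.range (n + 1)) hS
      exact ⟨L, hLS, hL, fun m hm => hstable m (Finset.mem_range.2 (Nat.lt_succ_of_le hm))⟩

end Stability

section Model

theorem Seminorm.exists_tendsto_ultrafilter {E ι : Type*} [AddCommGroup E] [Module ℝ E]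
    (p : ι → Seminorm ℝ E) (U : Ultrafilter ι) (hp : ∀ v, ∃ c, ∀ i, p i v ≤ c) :
    ∃ ρ : Seminorm ℝ E, ∀ v, Tendsto (fun i => p i v) U (𝓝 (ρ v)) := by
  have hlim : ∀ v, ∃ c, Tendsto (fun i => p i v) U (𝓝 c) := fun v => by
    obtain ⟨c, hc⟩ := hp v
    obtain ⟨x, -, hx⟩ := isCompact_Icc.ultrafilter_le_nhds (U.map fun i => p i v)
      (by
        simp only [Ultrafilter.coe_map, Filter.le_principal_iff, Filter.mem_map]
        exact Filter.univ_mem' fun i => ⟨apply_nonneg _ _, hc i⟩)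
    exact ⟨x, hx⟩
  choose f hf using hlim
  refine ⟨Seminorm.of f (fun u v => le_of_tendsto_of_tendsto' (hf _) ((hf u).add (hf v))
    fun i => map_add_le_add _ _ _) (fun a v => tendsto_nhds_unique (hf _) ?_), hf⟩
  simpa [map_smul_eq_mul] using (hf v).const_mul ‖a‖

noncomputable def tupleSeminorm (y : ℕ → Finset ℕ → X) (s : ℕ → Finset ℕ) :
    Seminorm ℝ (ℕ →₀ ℝ) :=
  (normSeminorm ℝ X).comp (Finsupp.linearCombination ℝ fun j => y j (s j))

variable {F : Set (Finset ℕ)} {y : ℕ → Finset ℕ → X} {C : ℝ} {ℓ : ℕ → ℕ} {m n : ℕ}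

lemma tupleSeminorm_comb (a : ℕ → ℝ) (m : ℕ) (s : ℕ → Finset ℕ) :
    tupleSeminorm y s (comb a m) = tupleNorm y m a s := by
  simp [tupleSeminorm, tupleNorm, comb, map_sum]

lemma tupleSeminorm_le (hy : ∀ j t, ‖y j t‖ ≤ C) (s : ℕ → Finset ℕ) (v : ℕ →₀ ℝ) :
    tupleSeminorm y s v ≤ C * ∑ j ∈ v.support, |v j| := by
  simp only [tupleSeminorm, Seminorm.comp_apply, coe_normSeminorm,
    Finsupp.linearCombination_apply, Finsupp.sum, Finset.mul_sum]
  refine (norm_sum_le _ _).trans (Finset.sum_le_sum fun j _ => ?_)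
  rw [norm_smul, Real.norm_eq_abs, mul_comm]
  exact mul_le_mul_of_nonneg_right (hy j (s j)) (abs_nonneg _)

lemma isPlegmaIn_image_Ici (hℓ : StrictMono ℓ) (hm : 1 ≤ m) {s : ℕ → Finset ℕ}
    (hsF : ∀ j < m, s j ∈ restrict F ℓ) (hs : IsPlegma m s) (hdepth : ℓ n ≤ nth (s 0) 1) :
    IsPlegmaIn F (ℓ '' Set.Ici n) m s := by
  refine ⟨fun j hj => ⟨(hsF j hj).1, fun y hy => ?_⟩, hs⟩
  obtain ⟨r, rfl⟩ := (hsF j hj).2 hy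
  have h0j : nth (s 0) 1 ≤ nth (s j) 1 := by
    rcases Nat.eq_zero_or_pos j with rfl | hj0
    · exact le_rfl
    have := Finset.card_pos.2 (hs.1 0 (by omega))
    have := Finset.card_pos.2 (hs.1 j hj)
    exact (hs.2.1 0 j hj0 hj 1 le_rfl (by omega)).le
  exact ⟨r, hℓ.le_iff_le.1 (hdepth.trans (h0j.trans (nth_one_le hy))), rfl⟩

def HasPlegmaAt (F : Set (Finset ℕ)) (ℓ : ℕ → ℕ) (m n : ℕ) : Prop :=
  ∃ s, IsPlegmaIn F (ℓ '' Set.Ici n) m s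

lemma hasPlegmaAt_zero : HasPlegmaAt F ℓ 0 n :=
  ⟨fun _ => ∅, by simp [IsPlegmaIn, IsPlegma]⟩

lemma HasPlegmaAt.mono {m' n' : ℕ} (h : HasPlegmaAt F ℓ m n) (hm : m' ≤ m) (hn : n' ≤ n) :
    HasPlegmaAt F ℓ m' n' :=
  let ⟨s, hs⟩ := h
  ⟨s, (hs.of_le hm).mono (Set.image_mono (Set.Ici_subset_Ici.2 hn))⟩

/-- If some length does not occur at every depth, the least such length fails from some depth
on, and so does every longer one. -/
lemma eventually_hasPlegmaAt_imp_forall :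
    ∀ᶠ n in atTop, ∀ m, HasPlegmaAt F ℓ m n → ∀ r, HasPlegmaAt F ℓ m r := by
  classical
  by_cases h : ∃ m, ¬∀ r, HasPlegmaAt F ℓ m r
  · obtain ⟨n₀, hn₀⟩ := not_forall.1 (Nat.find_spec h)
    filter_upwards [eventually_ge_atTop n₀] with n hn m hm
    by_contra hmr
    exact hn₀ (hm.mono (Nat.find_min' h hmr) hn)
  · push Not at h
    exact Eventually.of_forall fun _ m _ => h m

lemma exists_isPlegmaIn_of_hasPlegmaAt (F : Set (Finset ℕ)) (ℓ : ℕ → ℕ) :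
    ∃ T : ℕ → ℕ → Finset ℕ, ∀ r m, m ≤ r → HasPlegmaAt F ℓ m r →
      IsPlegmaIn F (ℓ '' Set.Ici r) m (T r) := by
  classical
  choose T hT using fun r => Nat.findGreatest_spec (P := (HasPlegmaAt F ℓ · r)) (Nat.zero_le r)
    hasPlegmaAt_zero
  exact ⟨T, fun r m hmr hm => (hT r).of_le (Nat.le_findGreatest hmr hm)⟩

end Model

theorem exists_strictMono_plegma_model {F : Set (Finset ℕ)} (hF : IsAntichain (· ⊆ ·) F)
    {y : ℕ → Finset ℕ → X} {C : ℝ} (hy : ∀ j t, ‖y j t‖ ≤ C) {A : Set ℕ} (hA : A.Infinite) :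
    ∃ ℓ : ℕ → ℕ, StrictMono ℓ ∧ Set.range ℓ ⊆ A ∧
      ∃ ρ : Seminorm ℝ (ℕ →₀ ℝ), ∃ δ : ℕ → ℝ, NullPos δ ∧
        ∀ m n, 1 ≤ m → m ≤ n → ∀ a : ℕ → ℝ, (∀ j, |a j| ≤ 1) → ∀ s : ℕ → Finset ℕ,
          (∀ j < m, s j ∈ restrict F ℓ) → IsPlegma m s → ℓ n ≤ nth (s 0) 1 →
            |tupleNorm y m a s - ρ (comb a m)| ≤ δ n := by
  classical
  have hC : 0 ≤ C := (norm_nonneg _).trans (hy 0 ∅)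
  obtain ⟨ℓ, hℓ, hℓA, hstab⟩ := exists_strictMono_isStableOn hF hy hA
  obtain ⟨T, hT⟩ := exists_isPlegmaIn_of_hasPlegmaAt F ℓ
  obtain ⟨ρ, hρ⟩ := Seminorm.exists_tendsto_ultrafilter (fun r => tupleSeminorm y (T r))
    (hyperfilter ℕ) fun v => ⟨_, fun r => tupleSeminorm_le hy (T r) v⟩
  let Good (n : ℕ) : Prop := ∀ m, HasPlegmaAt F ℓ m n → ∀ r, HasPlegmaAt F ℓ m r
  refine ⟨ℓ, hℓ, hℓA, ρ, fun n => if Good n then 1 / (n + 1) else 2 * C * n + 1,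
    ⟨fun n => by dsimp only; split_ifs <;> positivity, ?_⟩, ?_⟩
  · exact tendsto_one_div_add_atTop_nhds_zero_nat.congr'
      (eventually_hasPlegmaAt_imp_forall.mono fun n hn => (if_pos hn).symm)
  intro m n hm hmn a ha s hsF hs hdepth
  have hsL := isPlegmaIn_image_Ici hℓ hm hsF hs hdepth
  have hlim := hρ (comb a m)
  simp only [tupleSeminorm_comb] at hlim
  dsimp only
  split_ifs with hgood
  · -- for `r ≥ n`, the first `m` components of `T r` form a plegma tuple in `ℓ '' Ici n`
    have hev : ∀ᶠ r in (hyperfilter ℕ : Filter ℕ),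
        |tupleNorm y m a s - tupleNorm y m a (T r)| ≤ 1 / (n + 1) :=
      ((eventually_ge_atTop n).filter_mono Nat.hyperfilter_le_atTop).mono fun r hr =>
        hstab n m hmn a ha s (T r) hsL <| (hT r m (hmn.trans hr) (hgood m ⟨s, hsL⟩ r)).mono
          (Set.image_mono (Set.Ici_subset_Ici.2 hr))
    exact le_of_tendsto (tendsto_const_nhds.sub hlim).abs hev
  · have hρle : ρ (comb a m) ≤ C * m :=
      le_of_tendsto hlim (Eventually.of_forall fun r => tupleNorm_le hy ha _)
    have hsle := tupleNorm_le hy ha s (m := m)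
    have hmn' : (m : ℝ) ≤ n := by exact_mod_cast hmn
    have := apply_nonneg ρ (comb a m)
    have : 0 ≤ tupleNorm y m a s := norm_nonneg _
    rw [abs_le]
    constructor <;> nlinarith

lemma RegularThin.isAntichain {F : Set (Finset ℕ)} (hF : RegularThin F) :
    IsAntichain (· ⊆ ·) F := by
  obtain ⟨R, -, rfl⟩ := hF
  exact fun s hs t ht hne hst => hne (hs.2 t ht.1 hst)

theorem statement4_general {X : Type*} [NormedAddCommGroup X] [NormedSpace ℝ X]
    (F : Set (Finset ℕ)) (hF : RegularThin F)
    (k : ℕ) (hk : 1 ≤ k) (x : ℕ → Finset ℕ → X)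
    (hbdd : ∃ C : ℝ, ∀ i < k, ∀ s : Finset ℕ, ‖x i s‖ ≤ C)
    (M : ℕ → ℕ) (hM : StrictMono M) :
    ∃ L : ℕ → ℕ, StrictMono L ∧ Set.range L ⊆ Set.range M ∧
      ∃ ρ : Seminorm ℝ (ℕ →₀ ℝ), ∃ δ : ℕ → ℝ, NullPos δ ∧
        JointGenerates F k x L δ ρ := by
  obtain ⟨C, hC⟩ := hbdd
  exact exists_strictMono_plegma_model hF.isAntichain (fun j t => hC _ (Nat.mod_lt j hk) t)
    (Set.infinite_range_of_injective hM.injective)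

/-- Theorem 12: existence of joint ℱ-models. -/
theorem statement4 {X : Type*} [NormedAddCommGroup X] [NormedSpace ℝ X] [CompleteSpace X]
    (F : Set (Finset ℕ)) (hF : RegularThin F)
    (k : ℕ) (hk : 1 ≤ k) (x : ℕ → Finset ℕ → X)
    (hbdd : ∃ C : ℝ, ∀ i < k, ∀ s : Finset ℕ, ‖x i s‖ ≤ C)
    (M : ℕ → ℕ) (hM : StrictMono M) :
    ∃ L : ℕ → ℕ, StrictMono L ∧ Set.range L ⊆ Set.range M ∧
      ∃ ρ : Seminorm ℝ (ℕ →₀ ℝ), ∃ δ : ℕ → ℝ, NullPos δ ∧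
        JointGenerates F k x L δ ρ :=
  statement4_general F hF k hk x hbdd M hM
end

section
/- Let 𝒞 be a family of normalized Schauder basic sequences (represented as norms on c00) satisfying: (i) for every (x_n)_n and (y_n)_n in 𝒞 there exists (z_n)_n in 𝒞 which 2-dominates both (x_n)_n and (y_n)_n; and (ii) for every sequence (c_k)_k of positive reals with Σ_k c_k^{-1} < ∞ and every sequence (x_n^1)_n, (x_n^2)_n, … in 𝒞 there exist (x_n)_n in 𝒞 and a constant K with sup_k c_k^{-1} ≤ K ≤ Σ_k c_k^{-1} such that (a) (x_n)_n (c_k K)-dominates (x_n^k)_n for every k ∈ ℕ, and (b) for every l ∈ ℕ and all a_1,…,a_l ∈ [−1,1], ‖Σ_{j=1}^l a_j x_j‖ ≤ K^{-1} Σ_k c_k^{-1} ‖Σ_{j=1}^l a_j x_j^k‖. If 𝒞 contains a strictly increasing sequence of length ω with respect to domination, then 𝒞 contains a strictly increasing sequence of length ω₁. -/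
open Set Filter Topology

variable {X : Type*} [NormedAddCommGroup X] [NormedSpace ℝ X]

/-!
Let `z₀ ≺ z₁ ≺ ⋯` be a strictly increasing chain in `𝒞`. Choose unit vectors `v m` for `z m`
on which the earlier `z k` are almost zero, and weights `γ m` so large that `γ m` outgrows the
values of `z m` on the earlier `v k`. Property (ii) with `c_{j,k} = γ k / 2^{jk}` gives
`ρ_j ∈ 𝒞` dominating every `z n`. As `c_{j+1,k} / c_{j,k} = 2^{-k}` is summable,
`ρ_j ⪯ ρ_{j+1}`, while `ρ_{j+1}(v m) / ρ_j(v m)` grows like `2^m`; so `(ρ_j)` is a new strictly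
increasing chain lying strictly above `(z n)`.

By transfinite recursion every `α < ω₁` then receives such a chain, strictly above the chains of
all `β < α`: there are countably many of those, and for an enumeration `(βₙ)` of `[0, α)` the
diagonal sequence whose `n`-th term is the `n`-th term of the chain of `β₀ ⊔ ⋯ ⊔ βₙ` is a strictly
increasing chain dominating all of them.
-/

local notation "Sem" => Seminorm ℝ (ℕ →₀ ℝ)

/-- Definition by transfinite recursion and choice: `P i a x` says that `x` is an admissible value
at `i` given the values of `a` below `i` (and nothing else, by `hP`). -/
theorem WellFoundedLT.exists_forall_of_forall_exists {ι β : Type*} [Preorder ι]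
    [WellFoundedLT ι] [Nonempty β] (P : ι → (ι → β) → β → Prop)
    (hP : ∀ i f g, (∀ j < i, f j = g j) → ∀ x, P i f x → P i g x)
    (h : ∀ i f, (∀ j < i, P j f (f j)) → ∃ x, P i f x) :
    ∃ a : ι → β, ∀ i, P i a (a i) := by
  classical
  let below (i : ι) (f : ∀ j, j < i → β) : ι → β := fun j =>
    if hj : j < i then f j hj else Classical.arbitrary β
  let a : ι → β := wellFounded_lt.fix fun i f =>
    if hx : ∃ x, P i (below i f) x then hx.choose else Classical.arbitrary β
  refine ⟨a, fun i => ?_⟩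
  induction i using WellFoundedLT.induction with
  | _ i ih =>
  have hbelow : ∀ j < i, below i (fun j _ => a j) j = a j := fun j hj => dif_pos hj
  have hx : ∃ x, P i (below i fun j _ => a j) x := h i _ fun j hj => by
    rw [hbelow j hj]
    exact hP j a _ (fun k hk => (hbelow k (hk.trans hj)).symm) _ (ih j hj)
  have ha : a i = hx.choose := by
    rw [show a i = _ from wellFounded_lt.fix_eq _ i, dif_pos hx]
  rw [ha]
  exact hP i _ a hbelow _ hx.choose_spec

theorem dom_refl (p : Sem) : Dom p p := ⟨1, one_pos, fun _ => (one_mul _).ge⟩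

theorem Dom.trans {p q r : Sem} (hpq : Dom p q) (hqr : Dom q r) : Dom p r := by
  obtain ⟨C₁, hC₁, h₁⟩ := hpq
  obtain ⟨C₂, hC₂, h₂⟩ := hqr
  refine ⟨C₁ * C₂, mul_pos hC₁ hC₂, fun v => (h₁ v).trans ?_⟩
  rw [mul_assoc]
  exact mul_le_mul_of_nonneg_left (h₂ v) hC₁.le

theorem Dom.trans_sdom {p q r : Sem} (hpq : Dom p q) (hqr : SDom q r) : SDom p r :=
  ⟨hpq.trans hqr.1, fun h => hqr.2 ⟨hqr.1, h.2.trans hpq⟩⟩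

theorem SDom.trans_dom {p q r : Sem} (hpq : SDom p q) (hqr : Dom q r) : SDom p r :=
  ⟨hpq.1.trans hqr, fun h => hpq.2 ⟨hpq.1, hqr.trans h.2⟩⟩

theorem Dom.finset_sup {ι : Type*} {s : Finset ι} {p : ι → Sem} {q : Sem}
    (h : ∀ i ∈ s, Dom (p i) q) : Dom (s.sup p) q := by
  classical
  induction s using Finset.induction_on with
  | empty => exact ⟨1, one_pos, fun _ => by simp⟩
  | insert i s _ ih =>
    obtain ⟨C₁, hC₁, h₁⟩ := h i (Finset.mem_insert_self i s)
    obtain ⟨C₂, hC₂, h₂⟩ := ih fun j hj => h j (Finset.mem_insert_of_mem hj)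
    refine ⟨C₁ + C₂, add_pos hC₁ hC₂, fun v => ?_⟩
    have := apply_nonneg q v
    rw [Finset.sup_insert, Seminorm.sup_apply]
    exact max_le (by nlinarith [h₁ v]) (by nlinarith [h₂ v])

theorem eq_zero_of_dom_zero {p : Sem} (h : Dom p 0) : p = 0 := by
  obtain ⟨C, -, h⟩ := h
  ext v
  exact le_antisymm (by simpa using h v) (apply_nonneg p v)

theorem exists_eq_one_le_of_not_dom {p q : Sem} (h : ¬ Dom p q) {ε : ℝ} (hε : 0 < ε) :
    ∃ v, p v = 1 ∧ q v ≤ ε := by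
  obtain ⟨v, hv⟩ : ∃ v, ε⁻¹ * q v < p v := by
    by_contra! h'
    exact h ⟨ε⁻¹, inv_pos.2 hε, h'⟩
  have hpv : 0 < p v := (mul_nonneg (inv_nonneg.2 hε.le) (apply_nonneg q v)).trans_lt hv
  have hpv' : ‖(p v)⁻¹‖ = (p v)⁻¹ := by rw [Real.norm_eq_abs, abs_of_pos (inv_pos.2 hpv)]
  refine ⟨(p v)⁻¹ • v, ?_, ?_⟩
  · rw [map_smul_eq_mul, hpv', inv_mul_cancel₀ hpv.ne']
  · rw [map_smul_eq_mul, hpv', inv_mul_le_iff₀ hpv]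
    rw [inv_mul_lt_iff₀ hε] at hv
    linarith

def SDomChain (z : ℕ → Sem) : Prop := ∀ m n, m < n → SDom (z m) (z n)

theorem sdomChain_of_succ {z : ℕ → Sem} (h : ∀ n, SDom (z n) (z (n + 1))) : SDomChain z := by
  intro m n hmn
  induction n, hmn using Nat.le_induction with
  | base => exact h m
  | succ n _ ih => exact ih.trans_dom (h n).1

namespace SDomChain

variable {z : ℕ → Sem}

theorem dom (hz : SDomChain z) {m n : ℕ} (h : m ≤ n) : Dom (z m) (z n) :=
  h.eq_or_lt.elim (fun h => h ▸ dom_refl _) fun h => (hz m n h).1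

theorem sdom_of_dom_succ (hz : SDomChain z) {n : ℕ} {p : Sem} (h : Dom (z (n + 1)) p) :
    SDom (z n) p :=
  (hz n (n + 1) n.lt_succ_self).trans_dom h

theorem exists_witness (hz : SDomChain z) (hz₀ : z 0 ≠ 0) (m : ℕ) {ε : ℝ} (hε : 0 < ε) :
    ∃ v, z m v = 1 ∧ ∀ k < m, z k v ≤ ε := by
  have hnd : ¬ Dom (z m) ((Finset.range m).sup z) := by
    cases m with
    | zero => exact fun h => hz₀ (eq_zero_of_dom_zero (by simpa [Seminorm.bot_eq_zero] using h))
    | succ m =>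
      refine fun h => (hz m (m + 1) m.lt_succ_self).2 ⟨(hz m (m + 1) m.lt_succ_self).1, ?_⟩
      exact h.trans (Dom.finset_sup fun k hk => hz.dom (Finset.mem_range_succ_iff.1 hk))
  obtain ⟨v, hv, hle⟩ := exists_eq_one_le_of_not_dom hnd hε
  exact ⟨v, hv, fun k hk => (Seminorm.le_finset_sup_apply (Finset.mem_range.2 hk)).trans hle⟩

end SDomChain

structure Witnesses (z : ℕ → Sem) (γ : ℕ → ℝ) (v : ℕ → ℕ →₀ ℝ) : Prop where
  pow_le : ∀ m, ((2 : ℝ) ^ m) ^ m ≤ γ m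
  pow_mul_le : ∀ k m, k < m → ((2 : ℝ) ^ m) ^ m * (γ k * z m (v k)) ≤ γ m
  apply_self : ∀ m, z m (v m) = 1
  apply_le : ∀ k m, k < m → z k (v m) ≤ (2 ^ m * γ m)⁻¹

theorem SDomChain.exists_witnesses {z : ℕ → Sem} (hz : SDomChain z) (hz₀ : z 0 ≠ 0) :
    ∃ γ v, Witnesses z γ v := by
  obtain ⟨a, ha⟩ := WellFoundedLT.exists_forall_of_forall_exists
    (fun m (f : ℕ → ℝ × (ℕ →₀ ℝ)) (x : ℝ × (ℕ →₀ ℝ)) =>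
      ((2 : ℝ) ^ m) ^ m ≤ x.1 ∧ (∀ k < m, ((2 : ℝ) ^ m) ^ m * ((f k).1 * z m (f k).2) ≤ x.1) ∧
        z m x.2 = 1 ∧ ∀ k < m, z k x.2 ≤ (2 ^ m * x.1)⁻¹)
    (fun m f g hfg x hx => ⟨hx.1, fun k hk => hfg k hk ▸ hx.2.1 k hk, hx.2.2⟩)
    (fun m f _ => by
      obtain ⟨g, hg⟩ := (insert (((2 : ℝ) ^ m) ^ m) ((Finset.range m).image
        fun k => ((2 : ℝ) ^ m) ^ m * ((f k).1 * z m (f k).2))).exists_le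
      have hpow : ((2 : ℝ) ^ m) ^ m ≤ g := hg _ (Finset.mem_insert_self _ _)
      have hg₀ : 0 < g := (by positivity : (0 : ℝ) < _).trans_le hpow
      obtain ⟨v, hv, hle⟩ := hz.exists_witness hz₀ m (ε := (2 ^ m * g)⁻¹) (by positivity)
      exact ⟨(g, v), hpow, fun k hk =>
        hg _ (Finset.mem_insert_of_mem (Finset.mem_image_of_mem _ (Finset.mem_range.2 hk))),
        hv, hle⟩)
  exact ⟨fun m => (a m).1, fun m => (a m).2, fun m => (ha m).1, fun k m hk => (ha m).2.1 k hk,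
    fun m => (ha m).2.2.1, fun k m hk => (ha m).2.2.2 k hk⟩

/-- `weight γ j k` is the constant `c_k` fed to property (ii) for the `j`-th seminorm of the new
chain. -/
noncomputable def weight (γ : ℕ → ℝ) (j k : ℕ) : ℝ := γ k / ((2 : ℝ) ^ k) ^ j

theorem weight_succ (γ : ℕ → ℝ) (j k : ℕ) : weight γ (j + 1) k = weight γ j k / 2 ^ k := by
  rw [weight, weight, pow_succ, div_div]

theorem inv_weight_mul_weight_succ {γ : ℕ → ℝ} {k : ℕ} (hγ : γ k ≠ 0) (j : ℕ) :
    (weight γ j k)⁻¹ * weight γ (j + 1) k = (1 / 2) ^ k := by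
  have : weight γ j k ≠ 0 := div_ne_zero hγ (by positivity)
  rw [weight_succ, div_eq_mul_inv, ← mul_assoc, inv_mul_cancel₀ this, one_mul, one_div, inv_pow]

namespace Witnesses

variable {z : ℕ → Sem} {γ : ℕ → ℝ} {v : ℕ → ℕ →₀ ℝ}

theorem one_le (hw : Witnesses z γ v) (m : ℕ) : 1 ≤ γ m :=
  (one_le_pow₀ (one_le_pow₀ one_le_two)).trans (hw.pow_le m)

theorem pos (hw : Witnesses z γ v) (m : ℕ) : 0 < γ m := one_pos.trans_le (hw.one_le m)

theorem weight_pos (hw : Witnesses z γ v) (j k : ℕ) : 0 < weight γ j k :=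
  div_pos (hw.pos k) (by positivity)

theorem summable_inv_weight (hw : Witnesses z γ v) (j : ℕ) :
    Summable fun k => (weight γ j k)⁻¹ := by
  refine Summable.of_norm_bounded_eventually summable_geometric_two ?_
  rw [Nat.cofinite_eq_atTop]
  filter_upwards [eventually_gt_atTop j] with k hk
  rw [Real.norm_eq_abs, abs_of_pos (inv_pos.2 (hw.weight_pos j k)), weight, inv_div,
    div_le_iff₀ (hw.pos k)]
  calc ((2 : ℝ) ^ k) ^ j = (1 / 2) ^ k * ((2 : ℝ) ^ k) ^ (j + 1) := by
        rw [pow_succ, one_div, inv_pow]; field_simp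
    _ ≤ (1 / 2) ^ k * ((2 : ℝ) ^ k) ^ k := by
        gcongr
        · exact one_le_pow₀ one_le_two
        · exact hk
    _ ≤ (1 / 2) ^ k * γ k := by gcongr; exact hw.pow_le k

theorem weight_mul_inv_weight_mul_le (hw : Witnesses z γ v) {j m k : ℕ} (hjm : j ≤ m)
    (hkm : k ≠ m) :
    weight γ (j + 1) m * ((weight γ j k)⁻¹ * z k (v m)) ≤ (1 / 2) ^ m * (1 / 2) ^ k := by
  have hγm := hw.pos m
  have hγk := hw.pos k
  have hA : (1 : ℝ) ≤ 2 ^ m := one_le_pow₀ one_le_two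
  have hB : (1 : ℝ) ≤ 2 ^ k := one_le_pow₀ one_le_two
  have hx := apply_nonneg (z k) (v m)
  have htarget : (1 / 2 : ℝ) ^ m * (1 / 2) ^ k = 1 / (2 ^ m * 2 ^ k) := by
    rw [one_div_pow, one_div_pow, one_div_mul_one_div]
  rw [weight, weight, inv_div, htarget]
  rcases hkm.lt_or_gt with hkm | hmk
  · have hBA : (2 : ℝ) ^ k ≤ 2 ^ m := pow_le_pow_right₀ one_le_two hkm.le
    calc γ m / (2 ^ m) ^ (j + 1) * ((2 ^ k) ^ j / γ k * z k (v m))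
        ≤ γ m / (2 ^ m) ^ (j + 1) * ((2 ^ k) ^ j / γ k * (2 ^ m * γ m)⁻¹) := by
          gcongr; exact hw.apply_le k m hkm
      _ = (2 ^ k) ^ j / ((2 ^ m) ^ j * 2 ^ m * 2 ^ m * γ k) := by
          field_simp; ring
      _ ≤ 1 / (2 ^ m * 2 ^ k) := by
          rw [div_le_div_iff₀ (by positivity) (by positivity), one_mul]
          calc ((2 : ℝ) ^ k) ^ j * (2 ^ m * 2 ^ k) ≤ (2 ^ m) ^ j * 2 ^ m * 2 ^ m * 1 := by
                rw [mul_one, mul_assoc]; gcongr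
            _ ≤ (2 ^ m) ^ j * 2 ^ m * 2 ^ m * γ k := by gcongr; exact hw.one_le k
  · have hjk : j + 1 ≤ k := by omega
    have hlater := hw.pow_mul_le m k hmk
    calc γ m / (2 ^ m) ^ (j + 1) * ((2 ^ k) ^ j / γ k * z k (v m))
        = ((2 ^ k) ^ (j + 1) * (γ m * z k (v m))) / ((2 ^ m) ^ (j + 1) * 2 ^ k * γ k) := by
          field_simp; ring
      _ ≤ ((2 ^ k) ^ k * (γ m * z k (v m))) / (2 ^ m * 2 ^ k * γ k) := by
          gcongr
          · exact le_self_pow₀ hA (by omega)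
      _ ≤ γ k / (2 ^ m * 2 ^ k * γ k) := by gcongr
      _ = 1 / (2 ^ m * 2 ^ k) := by field_simp

theorem weight_mul_tsum_le (hw : Witnesses z γ v) {j m : ℕ} (hjm : j ≤ m) :
    weight γ (j + 1) m * ∑' k, (weight γ j k)⁻¹ * z k (v m) ≤ 3 * (1 / 2) ^ m := by
  have hgeom : Summable fun k : ℕ => (1 / 2 : ℝ) ^ m * (1 / 2) ^ k :=
    summable_geometric_two.mul_left _
  have hpeak : Summable fun k : ℕ => if k = m then (1 / 2 : ℝ) ^ m else 0 :=
    summable_of_ne_finset_zero (s := {m}) fun k hk => if_neg (by simpa using hk)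
  set B : ℕ → ℝ := fun k => (1 / 2) ^ m * (1 / 2) ^ k + if k = m then (1 / 2) ^ m else 0
  have hB : Summable B := hgeom.add hpeak
  have hterm : ∀ k, weight γ (j + 1) m * ((weight γ j k)⁻¹ * z k (v m)) ≤ B k := by
    intro k
    rcases eq_or_ne k m with rfl | hkm
    · rw [hw.apply_self, mul_one, mul_comm, inv_weight_mul_weight_succ (hw.pos k).ne']
      simp [B]
    · refine (hw.weight_mul_inv_weight_mul_le hjm hkm).trans ?_
      simp [B, hkm]
  have hnonneg : ∀ k, 0 ≤ weight γ (j + 1) m * ((weight γ j k)⁻¹ * z k (v m)) := fun k =>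
    mul_nonneg (hw.weight_pos _ _).le (mul_nonneg (inv_pos.2 (hw.weight_pos _ _)).le
      (apply_nonneg _ _))
  calc weight γ (j + 1) m * ∑' k, (weight γ j k)⁻¹ * z k (v m)
      = ∑' k, weight γ (j + 1) m * ((weight γ j k)⁻¹ * z k (v m)) := tsum_mul_left.symm
    _ ≤ ∑' k, B k := (Summable.of_nonneg_of_le hnonneg hterm hB).tsum_le_tsum hterm hB
    _ = 3 * (1 / 2) ^ m := by
        rw [hgeom.tsum_add hpeak, tsum_mul_left, tsum_geometric_two, tsum_ite_eq]
        ring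

end Witnesses

theorem not_dom_of_tendsto {p q : Sem} {v : ℕ → ℕ →₀ ℝ} {s : ℕ → ℝ} {a : ℝ} (ha : 0 < a)
    (hs : ∀ m, 0 ≤ s m) (hp : ∀ m, a ≤ s m * p (v m))
    (hq : Tendsto (fun m => s m * q (v m)) atTop (𝓝 0)) : ¬ Dom p q := by
  rintro ⟨D, hD, hpq⟩
  obtain ⟨m, hm⟩ := (hq.eventually (gt_mem_nhds (div_pos ha hD))).exists
  have := mul_le_mul_of_nonneg_left (hpq (v m)) (hs m)
  rw [lt_div_iff₀ hD] at hm
  linarith [hp m]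

theorem comb_apply (a : ℕ → ℝ) (l i : ℕ) : comb a l i = if i < l then a i else 0 := by
  simp [comb, Finsupp.finsetSum_apply, Finsupp.single_apply]

theorem le_inv_mul_tsum_of_forall_comb_le {ρ : Sem} {x : ℕ → Sem} {u : ℕ → ℝ} {K : ℝ}
    (h : ∀ l a, (∀ j, |a j| ≤ 1) → ρ (comb a l) ≤ K⁻¹ * ∑' k, u k * x k (comb a l))
    (w : ℕ →₀ ℝ) : ρ w ≤ K⁻¹ * ∑' k, u k * x k w := by
  obtain ⟨l, hl⟩ := w.support.exists_nat_subset_range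
  set M := 1 + ∑ i ∈ Finset.range l, |w i|
  have hM : 0 < M := by positivity
  have hwM : ∀ i, |w i| ≤ M := fun i => by
    by_cases hi : i < l
    · linarith [Finset.single_le_sum (fun j _ => abs_nonneg (w j)) (Finset.mem_range.2 hi)]
    · have : w i = 0 := Finsupp.notMem_support_iff.1 fun h' => hi (Finset.mem_range.1 (hl h'))
      rw [this, abs_zero]; exact hM.le
  have hcomb : comb (fun i => M⁻¹ * w i) l = M⁻¹ • w := by
    ext i
    rw [comb_apply, Finsupp.smul_apply, smul_eq_mul]
    split_ifs with hi
    · rfl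
    · rw [Finsupp.notMem_support_iff.1 fun h' => hi (Finset.mem_range.1 (hl h')), mul_zero]
  have hnorm : ‖M⁻¹‖ = M⁻¹ := Real.norm_of_nonneg (inv_pos.2 hM).le
  have key := h l (fun i => M⁻¹ * w i) fun i => by
    rw [abs_mul, abs_of_pos (inv_pos.2 hM), inv_mul_le_one₀ hM]; exact hwM i
  simp only [hcomb, map_smul_eq_mul, hnorm, mul_left_comm _ M⁻¹, tsum_mul_left] at key
  exact le_of_mul_le_mul_left key (inv_pos.2 hM)

/-- Property (ii), with the upper estimate (b) stated for all vectors, which is equivalent by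
homogeneity (`le_inv_mul_tsum_of_forall_comb_le`). -/
def HasWeightedUpperBounds (C : Set Sem) : Prop :=
  ∀ c : ℕ → ℝ, (∀ k, 0 < c k) → (Summable fun k => (c k)⁻¹) →
    ∀ x : ℕ → Sem, (∀ k, x k ∈ C) → ∃ ρ ∈ C, ∃ K > 0,
      (∀ k, DominatedBy (c k * K) (x k) ρ) ∧ ∀ w, ρ w ≤ K⁻¹ * ∑' k, (c k)⁻¹ * x k w

section Ladder

variable {z : ℕ → Sem} {γ : ℕ → ℝ} {ρ : ℕ → Sem} {K : ℕ → ℝ} (hK : ∀ j, 0 < K j)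
  (hz : ∀ j k, DominatedBy (weight γ j k * K j) (z k) (ρ j))
  (hρ : ∀ j w, ρ j w ≤ (K j)⁻¹ * ∑' k, (weight γ j k)⁻¹ * z k w)
include hK hz hρ

theorem dom_succ_of_weight (hγ : ∀ k, 0 < γ k) (j : ℕ) : Dom (ρ j) (ρ (j + 1)) := by
  refine ⟨(K j)⁻¹ * (2 * K (j + 1)), by have := hK j; have := hK (j + 1); positivity,
    fun w => ?_⟩
  have hterm : ∀ k, (weight γ j k)⁻¹ * z k w ≤ (1 / 2) ^ k * (K (j + 1) * ρ (j + 1) w) := by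
    intro k
    calc (weight γ j k)⁻¹ * z k w
        ≤ (weight γ j k)⁻¹ * (weight γ (j + 1) k * K (j + 1) * ρ (j + 1) w) :=
          mul_le_mul_of_nonneg_left (hz (j + 1) k w)
            (inv_nonneg.2 (div_pos (hγ k) (by positivity)).le)
      _ = (1 / 2) ^ k * (K (j + 1) * ρ (j + 1) w) := by
          rw [← inv_weight_mul_weight_succ (hγ k).ne' j]; ring
  have hgeom : Summable fun k : ℕ => (1 / 2 : ℝ) ^ k * (K (j + 1) * ρ (j + 1) w) :=
    summable_geometric_two.mul_right _
  have hsum : ∑' k, (weight γ j k)⁻¹ * z k w ≤ 2 * (K (j + 1) * ρ (j + 1) w) := by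
    rw [← tsum_geometric_two, ← tsum_mul_right]
    exact (Summable.of_nonneg_of_le (fun k => mul_nonneg (inv_nonneg.2
      (div_pos (hγ k) (by positivity)).le) (apply_nonneg _ _)) hterm hgeom).tsum_le_tsum
      hterm hgeom
  calc ρ j w ≤ (K j)⁻¹ * ∑' k, (weight γ j k)⁻¹ * z k w := hρ j w
    _ ≤ (K j)⁻¹ * (2 * (K (j + 1) * ρ (j + 1) w)) :=
        mul_le_mul_of_nonneg_left hsum (inv_pos.2 (hK j)).le
    _ = (K j)⁻¹ * (2 * K (j + 1)) * ρ (j + 1) w := by ring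

theorem not_dom_succ_of_witnesses {v : ℕ → ℕ →₀ ℝ} (hw : Witnesses z γ v) (j : ℕ) :
    ¬ Dom (ρ (j + 1)) (ρ j) := by
  refine not_dom_of_tendsto (v := v) (s := weight γ (j + 1)) (inv_pos.2 (hK (j + 1)))
    (fun m => (hw.weight_pos _ _).le) (fun m => ?_) ?_
  · rw [inv_le_iff_one_le_mul₀' (hK (j + 1)), ← hw.apply_self m, ← mul_assoc,
      mul_comm (K _)]
    exact hz (j + 1) m (v m)
  · have hlim : Tendsto (fun m : ℕ => (K j)⁻¹ * 3 * (1 / 2 : ℝ) ^ m) atTop (𝓝 0) := by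
      rw [← mul_zero ((K j)⁻¹ * 3)]
      exact (tendsto_pow_atTop_nhds_zero_of_lt_one (by norm_num) (by norm_num)).const_mul _
    refine squeeze_zero' (Eventually.of_forall fun m => mul_nonneg (hw.weight_pos _ _).le
      (apply_nonneg _ _)) ?_ hlim
    filter_upwards [eventually_ge_atTop j] with m hjm
    calc weight γ (j + 1) m * ρ j (v m)
        ≤ weight γ (j + 1) m * ((K j)⁻¹ * ∑' k, (weight γ j k)⁻¹ * z k (v m)) :=
          mul_le_mul_of_nonneg_left (hρ j (v m)) (hw.weight_pos _ _).le
      _ = (K j)⁻¹ * (weight γ (j + 1) m * ∑' k, (weight γ j k)⁻¹ * z k (v m)) := by ring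
      _ ≤ (K j)⁻¹ * (3 * (1 / 2) ^ m) :=
          mul_le_mul_of_nonneg_left (hw.weight_mul_tsum_le hjm) (inv_pos.2 (hK j)).le
      _ = (K j)⁻¹ * 3 * (1 / 2) ^ m := by ring

end Ladder

theorem SDomChain.exists_sdomChain_above {C : Set Sem} (hC : HasWeightedUpperBounds C)
    {z : ℕ → Sem} (hzC : ∀ n, z n ∈ C) (hz : SDomChain z) (hz₀ : z 0 ≠ 0) :
    ∃ ρ : ℕ → Sem, (∀ j, ρ j ∈ C) ∧ SDomChain ρ ∧ ∀ n j, SDom (z n) (ρ j) := by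
  obtain ⟨γ, v, hw⟩ := hz.exists_witnesses hz₀
  choose ρ hρC K hK hzρ hρ using fun j =>
    hC (weight γ j) (hw.weight_pos j) (hw.summable_inv_weight j) z hzC
  refine ⟨ρ, hρC, sdomChain_of_succ fun j => ⟨dom_succ_of_weight hK hzρ hρ hw.pos j,
    fun h => not_dom_succ_of_witnesses hK hzρ hρ hw j h.2⟩, fun n j => ?_⟩
  exact hz.sdom_of_dom_succ ⟨_, mul_pos (hw.weight_pos _ _) (hK j), hzρ j (n + 1)⟩

section Diagonal

variable {ι : Type*} [PartialOrder ι] {Y : ι → ℕ → Sem} (hY : ∀ i, SDomChain (Y i))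
  (hlt : ∀ i j, i < j → ∀ n, SDom (Y i n) (Y j 0))
include hY hlt

theorem sdomChain_diagonal {b : ℕ → ι} (hb : Monotone b) : SDomChain fun n => Y (b n) n :=
  sdomChain_of_succ fun n => (hb n.le_succ).eq_or_lt.elim
    (fun h => h ▸ hY (b n) n (n + 1) n.lt_succ_self)
    (fun h => (hlt _ _ h n).trans_dom ((hY _).dom (Nat.zero_le _)))

theorem dom_diagonal {b : ℕ → ι} {i : ι} {k n : ℕ} (hi : i ≤ b n) (hk : k ≤ n) :
    Dom (Y i k) (Y (b n) n) :=
  hi.eq_or_lt.elim (fun h => h ▸ (hY i).dom hk)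
    (fun h => (hlt _ _ h k).1.trans ((hY _).dom (Nat.zero_le _)))

end Diagonal

theorem exists_sdomChain_above_of_countable {ι : Type*} [LinearOrder ι] [Countable ι]
    [Nonempty ι] {C : Set Sem} (hC : HasWeightedUpperBounds C) (hC₀ : ∀ p ∈ C, p ≠ 0)
    {Y : ι → ℕ → Sem} (hYC : ∀ i n, Y i n ∈ C) (hY : ∀ i, SDomChain (Y i))
    (hlt : ∀ i j, i < j → ∀ n, SDom (Y i n) (Y j 0)) :
    ∃ ρ : ℕ → Sem, (∀ j, ρ j ∈ C) ∧ SDomChain ρ ∧ ∀ i n, SDom (Y i n) (ρ 0) := by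
  obtain ⟨e, he⟩ := exists_surjective_nat ι
  obtain ⟨ρ, hρC, hρ, hdiag⟩ := (sdomChain_diagonal hY hlt (partialSups e).monotone)
    |>.exists_sdomChain_above hC (fun n => hYC _ _) (hC₀ _ (hYC _ _))
  refine ⟨ρ, hρC, hρ, fun i n => ?_⟩
  obtain ⟨k, rfl⟩ := he i
  exact (dom_diagonal hY hlt (le_partialSups_of_le e (le_max_left k n))
    (le_max_right k n)).trans_sdom (hdiag _ 0)

theorem countable_Iio_of_lt_ord_aleph_one {α : Ordinal} (hα : α < (Cardinal.aleph 1).ord) :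
    Countable (Set.Iio α) := by
  rw [← Cardinal.mk_le_aleph0_iff, Cardinal.mk_Iio_ordinal, Cardinal.lift_le_aleph0,
    ← Cardinal.lt_aleph_one_iff]
  exact Cardinal.lt_ord.1 hα

theorem exists_sdomChain_above_of_lt_ord_aleph_one {C : Set Sem}
    (hC : HasWeightedUpperBounds C) (hC₀ : ∀ p ∈ C, p ≠ 0) {f : ℕ → Sem} (hfC : ∀ n, f n ∈ C)
    (hf : SDomChain f) {α : Ordinal} (hα : α < (Cardinal.aleph 1).ord)
    {Y : Ordinal → ℕ → Sem} (hYC : ∀ β < α, ∀ n, Y β n ∈ C) (hY : ∀ β < α, SDomChain (Y β))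
    (hlt : ∀ β < α, ∀ γ < β, ∀ n, SDom (Y γ n) (Y β 0)) :
    ∃ y : ℕ → Sem, (∀ n, y n ∈ C) ∧ SDomChain y ∧ ∀ β < α, ∀ n, SDom (Y β n) (y 0) := by
  rcases (Set.Iio α).eq_empty_or_nonempty with h | ⟨β, hβ⟩
  · exact ⟨f, hfC, hf, fun β hβ => absurd hβ (Set.eq_empty_iff_forall_notMem.1 h β)⟩
  have := countable_Iio_of_lt_ord_aleph_one hα
  have : Nonempty (Set.Iio α) := ⟨⟨β, hβ⟩⟩
  obtain ⟨ρ, hρC, hρ, hYρ⟩ := exists_sdomChain_above_of_countable (ι := Set.Iio α) hC hC₀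
    (Y := fun β => Y β) (fun β => hYC β β.2) (fun β => hY β β.2) fun β γ h => hlt γ γ.2 β h
  exact ⟨ρ, hρC, hρ, fun β hβ => hYρ ⟨β, hβ⟩⟩

theorem statement9_general (C : Set (Seminorm ℝ (ℕ →₀ ℝ)))
    (hbasic : ∀ ρ ∈ C, (∀ n, ρ (Finsupp.single n 1) = 1) ∧
      ∃ K : ℝ, 1 ≤ K ∧ ∀ m n : ℕ, m ≤ n → ∀ a : ℕ → ℝ, ρ (comb a m) ≤ K * ρ (comb a n))
    (hcountable : ∀ c : ℕ → ℝ, (∀ k, 0 < c k) → (Summable fun k => (c k)⁻¹) →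
      ∀ x : ℕ → Seminorm ℝ (ℕ →₀ ℝ), (∀ k, x k ∈ C) →
      ∃ ρ ∈ C, ∃ K : ℝ, (∀ k, (c k)⁻¹ ≤ K) ∧ K ≤ ∑' k, (c k)⁻¹ ∧
        (∀ k, DominatedBy (c k * K) (x k) ρ) ∧
        (∀ l : ℕ, ∀ a : ℕ → ℝ, (∀ j, |a j| ≤ 1) →
          ρ (comb a l) ≤ K⁻¹ * ∑' k, (c k)⁻¹ * x k (comb a l)))
    (hω : ∃ f : ℕ → Seminorm ℝ (ℕ →₀ ℝ), (∀ n, f n ∈ C) ∧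
      ∀ m n : ℕ, m < n → SDom (f m) (f n)) :
    ∃ g : Ordinal → Seminorm ℝ (ℕ →₀ ℝ), (∀ α < (Cardinal.aleph 1).ord, g α ∈ C) ∧
      ∀ α β : Ordinal, α < β → β < (Cardinal.aleph 1).ord → SDom (g α) (g β) := by
  obtain ⟨f, hfC, hf⟩ := hω
  have hC₀ : ∀ p ∈ C, p ≠ 0 := fun p hp h => by simpa [h] using (hbasic p hp).1 0
  have hC : HasWeightedUpperBounds C := fun c hc hs x hx => by
    obtain ⟨ρ, hρC, K, hK, -, hxρ, hρ⟩ := hcountable c hc hs x hx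
    exact ⟨ρ, hρC, K, (inv_pos.2 (hc 0)).trans_le (hK 0), hxρ,
      le_inv_mul_tsum_of_forall_comb_le hρ⟩
  obtain ⟨Y, hY⟩ := WellFoundedLT.exists_forall_of_forall_exists
    (fun α (Y : Ordinal → ℕ → Sem) y => α < (Cardinal.aleph 1).ord →
      (∀ n, y n ∈ C) ∧ SDomChain y ∧ ∀ β < α, ∀ n, SDom (Y β n) (y 0))
    (fun α Y Y' hYY' y hy hα => (hy hα).imp_right <| And.imp_right fun h β hβ =>
      hYY' β hβ ▸ h β hβ)
    (fun α Y ih => by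
      by_cases hα : α < (Cardinal.aleph 1).ord
      · obtain ⟨y, hy⟩ := exists_sdomChain_above_of_lt_ord_aleph_one hC hC₀ hfC hf hα
          (fun β hβ => (ih β hβ (hβ.trans hα)).1) (fun β hβ => (ih β hβ (hβ.trans hα)).2.1)
          (fun β hβ => (ih β hβ (hβ.trans hα)).2.2)
        exact ⟨y, fun _ => hy⟩
      · exact ⟨f, fun h => absurd h hα⟩)
  exact ⟨fun α => Y α 0, fun α hα => (hY α hα).1 0, fun α β hαβ hβ => (hY β hβ).2.2 α hαβ 0⟩

/-- Theorem 20. -/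
theorem statement9 (C : Set (Seminorm ℝ (ℕ →₀ ℝ)))
    (hbasic : ∀ ρ ∈ C, (∀ n, ρ (Finsupp.single n 1) = 1) ∧
      ∃ K : ℝ, 1 ≤ K ∧ ∀ m n : ℕ, m ≤ n → ∀ a : ℕ → ℝ, ρ (comb a m) ≤ K * ρ (comb a n))
    (hpair : ∀ ρ₁ ∈ C, ∀ ρ₂ ∈ C, ∃ ρ ∈ C, DominatedBy 2 ρ₁ ρ ∧ DominatedBy 2 ρ₂ ρ)
    (hcountable : ∀ c : ℕ → ℝ, (∀ k, 0 < c k) → (Summable fun k => (c k)⁻¹) →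
      ∀ x : ℕ → Seminorm ℝ (ℕ →₀ ℝ), (∀ k, x k ∈ C) →
      ∃ ρ ∈ C, ∃ K : ℝ, (∀ k, (c k)⁻¹ ≤ K) ∧ K ≤ ∑' k, (c k)⁻¹ ∧
        (∀ k, DominatedBy (c k * K) (x k) ρ) ∧
        (∀ l : ℕ, ∀ a : ℕ → ℝ, (∀ j, |a j| ≤ 1) →
          ρ (comb a l) ≤ K⁻¹ * ∑' k, (c k)⁻¹ * x k (comb a l)))
    (hω : ∃ f : ℕ → Seminorm ℝ (ℕ →₀ ℝ), (∀ n, f n ∈ C) ∧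
      ∀ m n : ℕ, m < n → SDom (f m) (f n)) :
    ∃ g : Ordinal → Seminorm ℝ (ℕ →₀ ℝ), (∀ α < (Cardinal.aleph 1).ord, g α ∈ C) ∧
      ∀ α β : Ordinal, α < β → β < (Cardinal.aleph 1).ord → SDom (g α) (g β) :=
  statement9_general C hbasic hcountable hω
end
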